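/- arXiv:0705.2701 — 3 statements merged into one kernel-verified Lean document; each statement's English description precedes it below -/
import Mathlib

section
/- If E[N] < ∞ and ε_0 has variance σ_ε², then Parke's process has mean zero and covariance cov(X_0, X_r) = σ_ε² Σ_{k≥r} p_k = σ_ε² E[(N+1-r) 1_{N ≥ r}], where p_k = P(N ≥ k). -/
open MeasureTheory ProbabilityTheory Function

lemma tsum_int_shift {M : Type*} [AddCommMonoid M] [TopologicalSpace M] [T2Space M]
    (f : ℤ → M) (t : ℤ) (h : ∀ s : ℤ, t < s → f s = 0) :
    ∑' s : ℤ, f s = ∑' k : ℕ, f (t - k) := by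
  have hinj : Function.Injective (fun k : ℕ => t - (k : ℤ)) := by
    intro a b hab; simpa using hab
  refine (Function.Injective.tsum_eq hinj ?_).symm
  intro s hs
  have hst : s ≤ t := by
    by_contra hc
    exact hs (h s (not_le.1 hc))
  exact ⟨(t - s).toNat, by simp; omega⟩

lemma tsum_diag {M : Type*} [AddCommMonoid M] [TopologicalSpace M] [T2Space M]
    (f : ℤ × ℤ → M) (h : ∀ p : ℤ × ℤ, p.1 ≠ p.2 → f p = 0) :
    ∑' p : ℤ × ℤ, f p = ∑' s : ℤ, f (s, s) := by
  have hinj : Function.Injective (fun s : ℤ => ((s, s) : ℤ × ℤ)) := by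
    intro a b hab; have := congrArg Prod.fst hab; simpa using this
  refine (Function.Injective.tsum_eq hinj ?_).symm
  intro p hp
  have : p.1 = p.2 := by
    by_contra hc; exact hp (h p hc)
  exact ⟨p.1, by simp [Prod.ext_iff, this]⟩

lemma count_lemma (r m : ℕ) :
    ∑' k : ℕ, (if r + k ≤ m then (1 : ENNReal) else 0)
      = if r ≤ m then ((m + 1 - r : ℕ) : ENNReal) else 0 := by
  by_cases hrm : r ≤ m
  · rw [if_pos hrm, tsum_eq_sum (s := Finset.range (m + 1 - r))
      (fun k hk => by rw [if_neg]; simp at hk; omega)]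
    rw [Finset.sum_congr rfl (fun k hk => by rw [if_pos]; simp at hk; omega)]
    simp
  · rw [if_neg hrm, ENNReal.tsum_eq_zero.mpr]
    intro k; rw [if_neg]; omega

set_option maxHeartbeats 1000000 in
/-- If `E[N] < ∞` and the shocks have variance `σε²`, then Parke's error duration
process `X_t = Σ_{s ≤ t} g_{s,t} ε_s` has mean zero and covariance
`cov(X_0, X_r) = σε² Σ_{k ≥ r} p_k = σε² E[(N+1-r) 1_{N ≥ r}]`, where `p_k = ℙ(N ≥ k)`. -/
theorem parke_covariance
    {Ω : Type*} [MeasureSpace Ω] [IsProbabilityMeasure (ℙ : Measure Ω)]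
    (ε : ℤ → Ω → ℝ) (n : ℤ → Ω → ℕ)
    (hεmeas : ∀ s, Measurable (ε s)) (hnmeas : ∀ s, Measurable (n s))
    -- the shocks and the durations are jointly independent
    (hindep : iIndepFun
      (Sum.elim (fun s => ε s) (fun s ω => (n s ω : ℝ))) ℙ)
    -- the shocks are identically distributed with mean zero and variance σε²
    (hεident : ∀ s : ℤ, IdentDistrib (ε s) (ε 0) ℙ ℙ)
    (hεint : MemLp (ε 0) 2 ℙ)
    (hεmean : ∫ ω, ε 0 ω ∂ℙ = 0)
    (σε2 : ℝ) (hεvar : ∫ ω, (ε 0 ω) ^ 2 ∂ℙ = σε2)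
    -- the durations are identically distributed copies of `N` with `E[N] < ∞`
    (N : Ω → ℕ) (hNmeas : Measurable N)
    (hNident : ∀ s : ℤ, IdentDistrib (n s) N ℙ ℙ)
    (hNint : Integrable (fun ω => (N ω : ℝ)) ℙ)
    -- the process
    (X : ℤ → Ω → ℝ)
    (hX : ∀ t ω, X t ω = ∑' s : ℤ, if s ≤ t ∧ t ≤ s + (n s ω : ℤ) then ε s ω else 0) :
    (∀ t : ℤ, ∫ ω, X t ω ∂ℙ = 0) ∧
    (∀ r : ℕ,
      ∫ ω, X 0 ω * X (r : ℤ) ω ∂ℙ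
        = σε2 * ∑' k : ℕ, (ℙ {ω | r + k ≤ N ω}).toReal ∧
      ∫ ω, X 0 ω * X (r : ℤ) ω ∂ℙ
        = σε2 * ∫ ω, (if r ≤ N ω then (N ω : ℝ) + 1 - r else 0) ∂ℙ) := by
  classical
  -- measurability of the N-sets
  have hNset : ∀ m : ℕ, MeasurableSet {ω | m ≤ N ω} := fun m => hNmeas measurableSet_Ici
  have hnset : ∀ (s : ℤ) (m : ℕ), MeasurableSet {ω | m ≤ n s ω} :=
    fun s m => hnmeas s measurableSet_Ici
  have hNprob : ∀ (s : ℤ) (m : ℕ), ℙ {ω | m ≤ n s ω} = ℙ {ω | m ≤ N ω} := by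
    intro s m
    have := (hNident s).measure_mem_eq (s := Set.Ici m) measurableSet_Ici
    simpa [Set.preimage, Set.Ici] using this
  -- ∑ₖ ℙ(N ≥ k) is finite
  have hp_ne_top : ∑' k : ℕ, ℙ {ω | k ≤ N ω} ≠ ⊤ := by
    have h1 : ∀ k : ℕ, ℙ {ω | k ≤ N ω} = ∫⁻ ω, (if k ≤ N ω then (1:ENNReal) else 0) ∂ℙ := by
      intro k
      rw [← lintegral_indicator_one (hNset k)]
      refine lintegral_congr fun ω => ?_
      rw [Set.indicator_apply]
      rfl
    have h2 : ∑' k : ℕ, ℙ {ω | k ≤ N ω} = ∫⁻ ω, ((N ω : ENNReal) + 1) ∂ℙ := by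
      rw [tsum_congr h1,
        ← lintegral_tsum (f := fun (k : ℕ) (ω : Ω) => if k ≤ N ω then (1:ENNReal) else 0)
          (fun k => ((measurable_from_nat
            (f := fun m => if k ≤ m then (1:ENNReal) else 0)).comp hNmeas).aemeasurable)]
      refine lintegral_congr fun ω => ?_
      have := count_lemma 0 (N ω)
      simpa using this
    rw [h2]
    have h3 : ∫⁻ ω, ((N ω : ENNReal) + 1) ∂ℙ = (∫⁻ ω, (N ω : ENNReal) ∂ℙ) + 1 := by
      rw [lintegral_add_right _ measurable_const, lintegral_const, measure_univ, mul_one]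
    rw [h3]
    have h4 : ∫⁻ ω, (N ω : ENNReal) ∂ℙ < ⊤ := by
      have h5 := hNint.lintegral_lt_top
      have h6 : ∀ ω, ENNReal.ofReal ((N ω : ℝ)) = (N ω : ENNReal) := fun ω =>
        ENNReal.ofReal_natCast _
      rw [lintegral_congr h6] at h5
      exact h5
    exact ENNReal.add_ne_top.2 ⟨h4.ne, ENNReal.one_ne_top⟩
  -- general finiteness of shifted sums over ℤ
  have key : ∀ (a b : ℤ),
      ∑' s : ℤ, (if s ≤ a then ℙ {ω | (b - s).toNat ≤ N ω} else 0) ≠ ⊤ := by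
    intro a b
    set m := (b - a).natAbs with hm
    have hle : ∑' s : ℤ, (if s ≤ a then ℙ {ω | (b - s).toNat ≤ N ω} else 0)
        ≤ ∑' k : ℕ, ℙ {ω | k - m ≤ N ω} := by
      rw [tsum_int_shift _ a (fun s hs => if_neg (by omega))]
      refine ENNReal.tsum_le_tsum fun k => ?_
      rw [if_pos (by omega)]
      refine measure_mono fun ω hω => ?_
      simp only [Set.mem_setOf_eq] at hω ⊢
      omega
    refine ne_top_of_le_ne_top ?_ hle
    rw [← Summable.sum_add_tsum_nat_add' (f := fun k : ℕ => ℙ {ω | k - m ≤ N ω}) (k := m)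
      ENNReal.summable]
    refine ENNReal.add_ne_top.2 ⟨?_, ?_⟩
    · refine (ENNReal.sum_lt_top.2 fun i _ => ?_).ne
      exact measure_lt_top _ _
    · have hc : ∀ k : ℕ, ℙ {ω | (k + m) - m ≤ N ω} = ℙ {ω | k ≤ N ω} := by
        intro k; congr 1; ext ω; simp
      rw [tsum_congr hc]; exact hp_ne_top
  have hRsum : ∀ (a b : ℤ),
      Summable (fun s : ℤ => if s ≤ a then (ℙ {ω | (b - s).toNat ≤ N ω}).toReal else 0) := by
    intro a b
    have := ENNReal.summable_toReal (key a b)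
    refine this.congr fun s => ?_
    rw [apply_ite ENNReal.toReal, ENNReal.toReal_zero]
  -- facts about each ε s
  have hεL2 : ∀ s, MemLp (ε s) 2 ℙ := fun s => ((hεident s).memLp_iff).2 hεint
  have hεInt : ∀ s, Integrable (ε s) ℙ := fun s => (hεL2 s).integrable one_le_two
  have hεMean : ∀ s, ∫ ω, ε s ω ∂ℙ = 0 := fun s => ((hεident s).integral_eq).trans hεmean
  have hεSqInt : ∀ s, Integrable (fun ω => ε s ω ^ 2) ℙ := fun s => (hεL2 s).integrable_sq
  have hεSq : ∀ s, ∫ ω, ε s ω ^ 2 ∂ℙ = σε2 := fun s =>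
    (((hεident s).comp (measurable_id.pow_const 2)).integral_eq).trans hεvar
  have hεAbs : ∀ s, ∫ ω, |ε s ω| ∂ℙ = ∫ ω, |ε 0 ω| ∂ℙ := fun s =>
    ((hεident s).comp continuous_abs.measurable).integral_eq
  set Eabs : ℝ := ∫ ω, |ε 0 ω| ∂ℙ with hEabs
  have hEabs0 : 0 ≤ Eabs := integral_nonneg fun ω => abs_nonneg _
  have hσ0 : 0 ≤ σε2 := hεvar ▸ integral_nonneg fun ω => sq_nonneg _
  -- the indicator family
  set J : ℤ → ℤ → ℤ → Ω → ℝ :=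
    fun a b s ω => if s ≤ a ∧ (b - s).toNat ≤ n s ω then 1 else 0 with hJ
  set R : ℤ → ℤ → ℤ → ℝ :=
    fun a b s => if s ≤ a then (ℙ {ω | (b - s).toNat ≤ N ω}).toReal else 0 with hR
  have hJmeas : ∀ a b s, Measurable (J a b s) := by
    intro a b s
    have : J a b s = (fun m : ℕ => if s ≤ a ∧ (b - s).toNat ≤ m then (1:ℝ) else 0) ∘ n s := rfl
    rw [this]; exact measurable_from_nat.comp (hnmeas s)
  have hJint : ∀ a b s, ∫ ω, J a b s ω ∂ℙ = R a b s := by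
    intro a b s
    by_cases hsa : s ≤ a
    · have hJeq : J a b s = Set.indicator {ω | (b - s).toNat ≤ n s ω} (fun _ => (1:ℝ)) := by
        funext ω
        simp only [hJ, Set.indicator_apply, Set.mem_setOf_eq, hsa, true_and]
      rw [hJeq, integral_indicator_const _ (hnset s _), smul_eq_mul, mul_one, measureReal_def, hNprob]
      simp only [hR]
      rw [if_pos hsa]
    · have hJeq : J a b s = fun _ => (0:ℝ) := by
        funext ω; simp only [hJ]
        rw [if_neg (by tauto)]
      rw [hJeq]
      simp only [hR]
      rw [if_neg hsa]
      simp
  -- the process summands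
  set F : ℤ → ℤ → Ω → ℝ :=
    fun t s ω => if s ≤ t ∧ t ≤ s + (n s ω : ℤ) then ε s ω else 0 with hF
  have hFeq : ∀ t s, F t s = fun ω => J t t s ω * ε s ω := by
    intro t s; funext ω
    simp only [hF, hJ]
    by_cases h : s ≤ t ∧ t ≤ s + (n s ω : ℤ)
    · rw [if_pos h, if_pos ⟨h.1, by omega⟩, one_mul]
    · rw [if_neg h, if_neg (by intro hc; exact h ⟨hc.1, by omega⟩), zero_mul]
  have hFmeas : ∀ t s, Measurable (F t s) := by
    intro t s; rw [hFeq]; exact (hJmeas t t s).mul (hεmeas s)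
  have hFle : ∀ t s ω, ‖F t s ω‖ ≤ |ε s ω| := by
    intro t s ω; simp only [hF, Real.norm_eq_abs]; split <;> simp [abs_nonneg]
  have hFInt : ∀ t s, Integrable (F t s) ℙ := fun t s =>
    Integrable.mono' (hεInt s).abs (hFmeas t s).aestronglyMeasurable
      (Filter.Eventually.of_forall (hFle t s))
  -- independence of indicator and shock at the same index
  have hbase : ∀ s : ℤ, IndepFun (fun ω => (n s ω : ℝ)) (ε s) ℙ := by
    intro s
    exact hindep.indepFun (show (Sum.inr s : ℤ ⊕ ℤ) ≠ Sum.inl s by simp)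
  have hJindep : ∀ a b s, IndepFun (J a b s) (ε s) ℙ := by
    intro a b s
    have hφ : Measurable
        (fun y : ℝ => if s ≤ a ∧ (((b - s).toNat : ℕ) : ℝ) ≤ y then (1:ℝ) else 0) := by
      refine Measurable.ite ?_ measurable_const measurable_const
      by_cases h : s ≤ a
      · simp only [h, true_and]
        exact measurableSet_Ici
      · simp only [h, false_and, Set.setOf_false]
        exact MeasurableSet.empty
    have h2 := (hbase s).comp hφ measurable_id
    have h3 : (fun y : ℝ => if s ≤ a ∧ (((b - s).toNat : ℕ) : ℝ) ≤ y then (1:ℝ) else 0)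
        ∘ (fun ω => (n s ω : ℝ)) = J a b s := by
      funext ω
      simp only [Function.comp_apply, hJ, Nat.cast_le]
    rw [h3] at h2
    exact h2
  -- expectation of each summand is zero
  have hEF : ∀ t s, ∫ ω, F t s ω ∂ℙ = 0 := by
    intro t s
    rw [hFeq]
    have h1 := (hJindep t t s).integral_mul_eq_mul_integral (hJmeas t t s).aestronglyMeasurable
      (hεmeas s).aestronglyMeasurable
    calc ∫ ω, J t t s ω * ε s ω ∂ℙ = ∫ ω, (J t t s * ε s) ω ∂ℙ := rfl
      _ = (∫ ω, J t t s ω ∂ℙ) * ∫ ω, ε s ω ∂ℙ := h1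
      _ = 0 := by rw [hεMean s, mul_zero]
  -- the integral of the norm of each summand
  have hFnorm : ∀ t s, ∫ ω, ‖F t s ω‖ ∂ℙ = R t t s * Eabs := by
    intro t s
    have habs : (fun ω => ‖F t s ω‖) = (J t t s) * fun ω => |ε s ω| := by
      funext ω; rw [hFeq]
      simp only [Pi.mul_apply, Real.norm_eq_abs, abs_mul]
      simp only [hJ]; split <;> simp
    have hind : IndepFun (J t t s) (fun ω => |ε s ω|) ℙ := by
      have := (hJindep t t s).comp measurable_id continuous_abs.measurable
      exact this
    rw [show (∫ ω, ‖F t s ω‖ ∂ℙ) = ∫ ω, (J t t s * fun ω => |ε s ω|) ω ∂ℙ by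
      rw [← habs]]
    rw [hind.integral_mul_eq_mul_integral (hJmeas t t s).aestronglyMeasurable
      ((hεmeas s).abs).aestronglyMeasurable, hJint, hεAbs]
  -- mean zero
  have hmean : ∀ t : ℤ, ∫ ω, X t ω ∂ℙ = 0 := by
    intro t
    have h1 : (fun ω => X t ω) = fun ω => ∑' s : ℤ, F t s ω := by
      funext ω; rw [hX]
    rw [h1, ← integral_tsum_of_summable_integral_norm (fun s => hFInt t s) ?_]
    · rw [tsum_congr (fun s => hEF t s), tsum_zero]
    · refine ((hRsum t t).mul_right Eabs).congr fun s => ?_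
      rw [hFnorm t s]
  refine ⟨hmean, fun r => ?_⟩
  -- Borel–Cantelli: a.s. the series has finitely many nonzero terms
  have hBC : ∀ t : ℤ, ∀ᵐ ω ∂(ℙ : Measure Ω), Summable fun s : ℤ => F t s ω := by
    intro t
    have hsum : ∑' k : ℕ, ℙ {ω | k ≤ n (t - k) ω} ≠ ⊤ := by
      rw [tsum_congr (fun k : ℕ => hNprob (t - (k:ℤ)) k)]; exact hp_ne_top
    filter_upwards [ae_eventually_notMem hsum] with ω hω
    rw [Filter.eventually_atTop] at hω
    obtain ⟨K, hK⟩ := hω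
    refine summable_of_ne_finset_zero (s := Finset.Icc (t - K) t) fun s hs => ?_
    simp only [Finset.mem_Icc, not_and_or, not_le] at hs
    simp only [hF]
    rcases hs with hs | hs
    · rw [if_neg]
      rintro ⟨h1, h2⟩
      have h4 := hK (t - s).toNat (by omega)
      simp only [Set.mem_setOf_eq, not_le] at h4
      rw [show t - ((t - s).toNat : ℤ) = s by omega] at h4
      omega
    · rw [if_neg]
      rintro ⟨h1, -⟩
      omega
  -- a.e., the product of the two series is the series over pairs
  have hprodae : ∀ᵐ ω ∂(ℙ : Measure Ω),
      X 0 ω * X (r : ℤ) ω = ∑' q : ℤ × ℤ, F 0 q.1 ω * F (r : ℤ) q.2 ω := by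
    filter_upwards [hBC 0, hBC (r : ℤ)] with ω h0 hr
    rw [hX, hX]
    exact tsum_mul_tsum_of_summable_norm
      (by simpa [Real.norm_eq_abs] using h0.abs)
      (by simpa [Real.norm_eq_abs] using hr.abs)
  -- integrability of each pair product
  have hpairInt : ∀ q : ℤ × ℤ, Integrable (fun ω => F 0 q.1 ω * F (r : ℤ) q.2 ω) ℙ := by
    intro q
    have hbint : Integrable (fun ω => (ε q.1 ω ^ 2 + ε q.2 ω ^ 2) / 2) ℙ :=
      ((hεSqInt q.1).add (hεSqInt q.2)).div_const 2
    refine Integrable.mono' hbint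
      (((hFmeas 0 q.1).mul (hFmeas (r : ℤ) q.2)).aestronglyMeasurable)
      (Filter.Eventually.of_forall fun ω => ?_)
    have h1 := hFle 0 q.1 ω
    have h2 := hFle (r : ℤ) q.2 ω
    rw [norm_mul]
    calc ‖F 0 q.1 ω‖ * ‖F (r : ℤ) q.2 ω‖ ≤ |ε q.1 ω| * |ε q.2 ω| :=
          mul_le_mul h1 h2 (norm_nonneg _) (abs_nonneg _)
      _ ≤ (ε q.1 ω ^ 2 + ε q.2 ω ^ 2) / 2 := by
          nlinarith [sq_nonneg (|ε q.1 ω| - |ε q.2 ω|), sq_abs (ε q.1 ω), sq_abs (ε q.2 ω)]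
  -- independence of pairs at distinct indices
  have hpair : ∀ s u : ℤ, s ≠ u →
      IndepFun (fun ω => (ε s ω, (n s ω : ℝ))) (fun ω => (ε u ω, (n u ω : ℝ))) ℙ := by
    intro s u hsu
    have hmeasall : ∀ i : ℤ ⊕ ℤ,
        Measurable (Sum.elim (fun s => ε s) (fun s ω => ((n s ω : ℕ) : ℝ)) i) := by
      rintro (v | v)
      · exact hεmeas v
      · exact measurable_from_nat.comp (hnmeas v)
    exact hindep.indepFun_prodMk_prodMk hmeasall (Sum.inl s) (Sum.inr s) (Sum.inl u)
      (Sum.inr u) (by simp [hsu]) (by simp) (by simp) (by simp [hsu])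
  have hFFindep : ∀ (t1 t2 s u : ℤ), s ≠ u → IndepFun (F t1 s) (F t2 u) ℙ := by
    intro t1 t2 s u hsu
    have hΦ : ∀ t v : ℤ, Measurable (fun q : ℝ × ℝ =>
        if v ≤ t ∧ (((t - v).toNat : ℕ) : ℝ) ≤ q.2 then q.1 else 0) := by
      intro t v
      refine Measurable.ite ?_ measurable_fst measurable_const
      by_cases h : v ≤ t
      · simp only [h, true_and]
        exact measurable_snd measurableSet_Ici
      · simp only [h, false_and, Set.setOf_false]
        exact MeasurableSet.empty
    have h2 := (hpair s u hsu).comp (hΦ t1 s) (hΦ t2 u)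
    have h3 : ∀ t v : ℤ, (fun q : ℝ × ℝ =>
        if v ≤ t ∧ (((t - v).toNat : ℕ) : ℝ) ≤ q.2 then q.1 else 0)
        ∘ (fun ω => (ε v ω, (n v ω : ℝ))) = F t v := by
      intro t v; funext ω
      simp only [Function.comp_apply, hF, Nat.cast_le]
      by_cases h : v ≤ t ∧ (t - v).toNat ≤ n v ω
      · rw [if_pos h, if_pos ⟨h.1, by omega⟩]
      · rw [if_neg h, if_neg (fun hc => h ⟨hc.1, by omega⟩)]
    rw [h3 t1 s, h3 t2 u] at h2
    exact h2
  -- off-diagonal terms vanish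
  have hoffzero : ∀ q : ℤ × ℤ, q.1 ≠ q.2 → ∫ ω, F 0 q.1 ω * F (r : ℤ) q.2 ω ∂ℙ = 0 := by
    intro q hq
    have h1 := (hFFindep 0 (r : ℤ) q.1 q.2 hq).integral_mul_eq_mul_integral
      (hFmeas 0 q.1).aestronglyMeasurable (hFmeas (r : ℤ) q.2).aestronglyMeasurable
    rw [show (∫ ω, F 0 q.1 ω * F (r : ℤ) q.2 ω ∂ℙ)
        = integral ℙ (F 0 q.1 * F (r : ℤ) q.2) from rfl, h1, hEF, zero_mul]
  -- off-diagonal norms factorize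
  have hoffnorm : ∀ q : ℤ × ℤ, q.1 ≠ q.2 →
      ∫ ω, ‖F 0 q.1 ω * F (r : ℤ) q.2 ω‖ ∂ℙ
        = R 0 0 q.1 * Eabs * (R (r : ℤ) (r : ℤ) q.2 * Eabs) := by
    intro q hq
    have hind := (hFFindep 0 (r : ℤ) q.1 q.2 hq).comp
      (continuous_abs.measurable) (continuous_abs.measurable)
    have habs : (fun ω => ‖F 0 q.1 ω * F (r : ℤ) q.2 ω‖)
        = ((fun x : ℝ => |x|) ∘ F 0 q.1) * ((fun x : ℝ => |x|) ∘ F (r : ℤ) q.2) := by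
      funext ω
      simp [Real.norm_eq_abs, abs_mul, Function.comp]
    rw [show (∫ ω, ‖F 0 q.1 ω * F (r : ℤ) q.2 ω‖ ∂ℙ)
        = integral ℙ (((fun x : ℝ => |x|) ∘ F 0 q.1) * ((fun x : ℝ => |x|) ∘ F (r : ℤ) q.2))
        by rw [← habs]]
    rw [hind.integral_mul_eq_mul_integral ((hFmeas 0 q.1).abs.aestronglyMeasurable)
      ((hFmeas (r : ℤ) q.2).abs.aestronglyMeasurable)]
    have e1 : ∀ t v : ℤ, integral ℙ ((fun x : ℝ => |x|) ∘ F t v) = R t t v * Eabs := by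
      intro t v
      rw [show ((fun x : ℝ => |x|) ∘ F t v) = fun ω => ‖F t v ω‖ by
        funext ω; simp [Real.norm_eq_abs, Function.comp], hFnorm]
    rw [e1, e1]
  -- diagonal terms
  have hJnn : ∀ a b s ω, 0 ≤ J a b s ω := by
    intro a b s ω; simp only [hJ]; split <;> norm_num
  have hdiagF : ∀ s : ℤ,
      (fun ω => F 0 s ω * F (r : ℤ) s ω) = fun ω => J 0 (r : ℤ) s ω * ε s ω ^ 2 := by
    intro s; funext ω
    simp only [hF, hJ]
    by_cases h : s ≤ 0 ∧ ((r : ℤ) - s).toNat ≤ n s ω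
    · rw [if_pos (show s ≤ 0 ∧ (0:ℤ) ≤ s + (n s ω : ℤ) by omega),
        if_pos (show s ≤ (r:ℤ) ∧ (r:ℤ) ≤ s + (n s ω : ℤ) by omega), if_pos h, one_mul, sq]
    · rw [if_neg h]
      rcases not_and_or.1 h with h1 | h1
      · rw [if_neg (fun hc => h1 hc.1), zero_mul, zero_mul]
      · rw [if_neg (show ¬(s ≤ (r:ℤ) ∧ (r:ℤ) ≤ s + (n s ω : ℤ)) by omega), mul_zero, zero_mul]
  have hdiagval : ∀ s : ℤ, ∫ ω, F 0 s ω * F (r : ℤ) s ω ∂ℙ = R 0 (r : ℤ) s * σε2 := by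
    intro s
    rw [hdiagF s]
    have hind : IndepFun (J 0 (r : ℤ) s) (fun ω => ε s ω ^ 2) ℙ :=
      (hJindep 0 (r : ℤ) s).comp measurable_id (measurable_id.pow_const 2)
    rw [show (∫ ω, J 0 (r : ℤ) s ω * ε s ω ^ 2 ∂ℙ)
        = integral ℙ (J 0 (r : ℤ) s * fun ω => ε s ω ^ 2) from rfl,
      hind.integral_mul_eq_mul_integral (hJmeas 0 (r : ℤ) s).aestronglyMeasurable
        (((hεmeas s).pow_const 2).aestronglyMeasurable), hJint, hεSq]
  have hdiagnorm : ∀ s : ℤ, ∫ ω, ‖F 0 s ω * F (r : ℤ) s ω‖ ∂ℙ = R 0 (r : ℤ) s * σε2 := by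
    intro s
    have hn : (fun ω => ‖F 0 s ω * F (r : ℤ) s ω‖) = fun ω => F 0 s ω * F (r : ℤ) s ω := by
      funext ω
      rw [Real.norm_eq_abs, abs_of_nonneg]
      have h0 := congrFun (hdiagF s) ω
      rw [h0]
      exact mul_nonneg (hJnn _ _ _ _) (sq_nonneg _)
    rw [hn]
    exact hdiagval s
  -- summability of the norms over pairs
  have hRnn : ∀ a b s, 0 ≤ R a b s := by
    intro a b s; simp only [hR]; split
    · exact ENNReal.toReal_nonneg
    · exact le_refl 0
  have hRsum' : ∀ a b : ℤ, Summable (R a b) := fun a b => hRsum a b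
  have hM : Summable (fun q : ℤ × ℤ =>
      R 0 0 q.1 * Eabs * (R (r : ℤ) (r : ℤ) q.2 * Eabs)
        + (if q.1 = q.2 then R 0 (r : ℤ) q.1 * σε2 else 0)) := by
    refine Summable.add ?_ ?_
    · exact ((hRsum' 0 0).mul_right Eabs).mul_of_nonneg ((hRsum' (r:ℤ) (r:ℤ)).mul_right Eabs)
        (fun s => mul_nonneg (hRnn _ _ _) hEabs0) (fun s => mul_nonneg (hRnn _ _ _) hEabs0)
    · have hinj : Function.Injective (fun s : ℤ => ((s, s) : ℤ × ℤ)) := by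
        intro a b hab
        have := congrArg Prod.fst hab; simpa using this
      refine (Function.Injective.summable_iff hinj ?_).1 ?_
      · rintro ⟨q1, q2⟩ hq
        have hne : q1 ≠ q2 := by
          intro h; exact hq ⟨q1, by simp [h]⟩
        rw [if_neg hne]
      · refine ((hRsum' 0 (r : ℤ)).mul_right σε2).congr fun s => ?_
        simp
  have hSnn : ∀ q : ℤ × ℤ, 0 ≤ ∫ ω, ‖F 0 q.1 ω * F (r : ℤ) q.2 ω‖ ∂ℙ :=
    fun q => integral_nonneg fun ω => norm_nonneg _
  have hbound : ∀ q : ℤ × ℤ, ∫ ω, ‖F 0 q.1 ω * F (r : ℤ) q.2 ω‖ ∂ℙ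
      ≤ R 0 0 q.1 * Eabs * (R (r : ℤ) (r : ℤ) q.2 * Eabs)
        + (if q.1 = q.2 then R 0 (r : ℤ) q.1 * σε2 else 0) := by
    rintro ⟨s, u⟩
    by_cases hq : s = u
    · subst hq
      rw [if_pos rfl]
      have h1 := hdiagnorm s
      have h2 : 0 ≤ R 0 0 s * Eabs * (R (r : ℤ) (r : ℤ) s * Eabs) :=
        mul_nonneg (mul_nonneg (hRnn _ _ _) hEabs0) (mul_nonneg (hRnn _ _ _) hEabs0)
      linarith [le_of_eq h1]
    · rw [if_neg hq, add_zero]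
      exact le_of_eq (hoffnorm ⟨s, u⟩ hq)
  have hS : Summable (fun q : ℤ × ℤ => ∫ ω, ‖F 0 q.1 ω * F (r : ℤ) q.2 ω‖ ∂ℙ) :=
    Summable.of_nonneg_of_le hSnn hbound hM
  -- the sum of the diagonal
  have hsumR : ∑' s : ℤ, R 0 (r : ℤ) s = ∑' k : ℕ, (ℙ {ω | r + k ≤ N ω}).toReal := by
    rw [tsum_int_shift (R 0 (r : ℤ)) 0 (fun s hs => by
      simp only [hR]; rw [if_neg (by omega)])]
    refine tsum_congr fun k => ?_
    simp only [hR]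
    rw [if_pos (by omega : (0:ℤ) - (k:ℤ) ≤ 0)]
    have hset : {ω | ((r : ℤ) - (0 - (k : ℤ))).toNat ≤ N ω} = {ω | r + k ≤ N ω} := by
      ext ω; simp only [Set.mem_setOf_eq]; omega
    rw [hset]
  -- first covariance formula
  have hcov : ∫ ω, X 0 ω * X (r : ℤ) ω ∂ℙ
      = σε2 * ∑' k : ℕ, (ℙ {ω | r + k ≤ N ω}).toReal := by
    rw [integral_congr_ae hprodae,
      ← integral_tsum_of_summable_integral_norm hpairInt hS,
      tsum_diag (fun q : ℤ × ℤ => ∫ ω, F 0 q.1 ω * F (r : ℤ) q.2 ω ∂ℙ) hoffzero,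
      tsum_congr (fun s => hdiagval s), tsum_mul_right, hsumR, mul_comm]
  -- connect the tail-sum with the expectation
  have hsum_int : ∑' k : ℕ, (ℙ {ω | r + k ≤ N ω}).toReal
      = ∫ ω, (if r ≤ N ω then (N ω : ℝ) + 1 - r else 0) ∂ℙ := by
    have hEsum : ∑' k : ℕ, ℙ {ω | r + k ≤ N ω}
        = ∫⁻ ω, (if r ≤ N ω then ((N ω + 1 - r : ℕ) : ENNReal) else 0) ∂ℙ := by
      have h1 : ∀ k : ℕ, ℙ {ω | r + k ≤ N ω}
          = ∫⁻ ω, (if r + k ≤ N ω then (1:ENNReal) else 0) ∂ℙ := by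
        intro k
        rw [← lintegral_indicator_one (hNset (r + k))]
        refine lintegral_congr fun ω => ?_
        rw [Set.indicator_apply]
        rfl
      rw [tsum_congr h1,
        ← lintegral_tsum (f := fun (k : ℕ) (ω : Ω) => if r + k ≤ N ω then (1:ENNReal) else 0)
          (fun k => ((measurable_from_nat
            (f := fun m => if r + k ≤ m then (1:ENNReal) else 0)).comp hNmeas).aemeasurable)]
      exact lintegral_congr fun ω => count_lemma r (N ω)
    have hmeas2 : Measurable (fun ω => if r ≤ N ω then (N ω : ℝ) + 1 - r else 0) :=
      (measurable_from_nat (f := fun m : ℕ => if r ≤ m then (m : ℝ) + 1 - r else 0)).comp hNmeas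
    rw [integral_eq_lintegral_of_nonneg_ae (Filter.Eventually.of_forall fun ω => ?_)
      hmeas2.aestronglyMeasurable]
    · have hofr : ∀ ω, ENNReal.ofReal (if r ≤ N ω then (N ω : ℝ) + 1 - r else 0)
          = (if r ≤ N ω then ((N ω + 1 - r : ℕ) : ENNReal) else 0) := by
        intro ω
        by_cases h : r ≤ N ω
        · have hc : (N ω : ℝ) + 1 - r = ((N ω + 1 - r : ℕ) : ℝ) := by
            rw [Nat.cast_sub (by omega)]
            push_cast
            ring
          rw [if_pos h, if_pos h, hc, ENNReal.ofReal_natCast]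
        · rw [if_neg h, if_neg h, ENNReal.ofReal_zero]
      rw [lintegral_congr hofr, ← hEsum]
      exact (ENNReal.tsum_toReal_eq (fun k => measure_ne_top _ _)).symm
    · show (0:ℝ) ≤ _
      by_cases h : r ≤ N ω
      · rw [if_pos h]
        have : (r : ℝ) ≤ (N ω : ℝ) := Nat.cast_le.2 h
        linarith
      · rw [if_neg h]
  exact ⟨hcov, by rw [hcov, hsum_int]⟩
end

section
/- If the survival probabilities satisfy p_j = P(N ≥ j) = L(j) j^{-α} for j ≥ 1 with α ∈ (1,2) and L slowly varying and ultimately monotone, then the autocovariance γ(r) = σ_ε² Σ_{k≥r} p_k of Parke's process is regularly varying of index 2H−2 with H = (3−α)/2; specifically γ(r) ~ σ_ε² L(r) r^{1-α}/(α−1) as r → ∞. -/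
open Filter

lemma key_ineq {β x : ℝ} (hβ : 1 < β) (hx : 0 < x) :
    (β - 1) * (x+1) ^ (-β) ≤ x ^ (1-β) - (x+1) ^ (1-β) ∧
    x ^ (1-β) - (x+1) ^ (1-β) ≤ (β - 1) * x ^ (-β) := by
  have hx1 : x < x + 1 := by linarith
  have hcont : ContinuousOn (fun t : ℝ => t ^ (1-β)) (Set.Icc x (x+1)) := by
    intro t ht
    exact (Real.continuousAt_rpow_const t _ (Or.inl (by nlinarith [ht.1]))).continuousWithinAt
  have hderiv : ∀ t ∈ Set.Ioo x (x+1),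
      HasDerivAt (fun t : ℝ => t ^ (1-β)) ((1-β) * t ^ (-β)) t := by
    intro t ht
    have := Real.hasDerivAt_rpow_const (x := t) (p := 1-β) (Or.inl (by nlinarith [ht.1]))
    simpa [show (1:ℝ)-β-1 = -β by ring] using this
  obtain ⟨c, hc, hceq⟩ := exists_hasDerivAt_eq_slope _ _ hx1 hcont hderiv
  have heq : x ^ (1-β) - (x+1) ^ (1-β) = (β - 1) * c ^ (-β) := by
    have : (1-β) * c ^ (-β) = ((x+1) ^ (1-β) - x ^ (1-β)) / (x + 1 - x) := hceq
    rw [show x + 1 - x = 1 by ring, div_one] at this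
    linarith [this]
  have hc1 : (x+1) ^ (-β) ≤ c ^ (-β) :=
    Real.rpow_le_rpow_of_nonpos (by linarith [hc.1]) (le_of_lt hc.2) (by linarith)
  have hc2 : c ^ (-β) ≤ x ^ (-β) :=
    Real.rpow_le_rpow_of_nonpos hx (le_of_lt hc.1) (by linarith)
  constructor
  · rw [heq]; nlinarith
  · rw [heq]; nlinarith

lemma sum_rpow_upper {β : ℝ} (hβ : 1 < β) {r : ℝ} (hr : 2 ≤ r) (n : ℕ) :
    ∑ k ∈ Finset.range n, (r + k) ^ (-β) ≤ (r-1)^(1-β)/(β-1) := by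
  have hb : (0:ℝ) < β - 1 := by linarith
  rw [le_div_iff₀ hb, Finset.sum_mul]
  have h1 : ∑ k ∈ Finset.range n, (r + (k:ℝ)) ^ (-β) * (β-1)
      ≤ ∑ k ∈ Finset.range n, ((r - 1 + k) ^ (1-β) - (r - 1 + (k+1)) ^ (1-β)) := by
    apply Finset.sum_le_sum
    intro k _
    have hx : (0:ℝ) < r - 1 + k := by
      have : (0:ℝ) ≤ (k:ℝ) := Nat.cast_nonneg k
      linarith
    have := (key_ineq hβ hx).1
    have he : r - 1 + (k:ℝ) + 1 = r + k := by ring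
    rw [he] at this
    calc (r + (k:ℝ)) ^ (-β) * (β-1) = (β-1) * (r + k)^(-β) := by ring
    _ ≤ _ := by rw [show r - 1 + ((k:ℝ)+1) = r + k by ring]; exact this
  calc ∑ k ∈ Finset.range n, (r + (k:ℝ)) ^ (-β) * (β-1)
      ≤ ∑ k ∈ Finset.range n, ((fun k : ℕ => (r - 1 + k) ^ (1-β)) k
          - (fun k : ℕ => (r - 1 + k) ^ (1-β)) (k+1)) := by
        refine h1.trans_eq (Finset.sum_congr rfl fun k _ => ?_)
        push_cast; ring_nf
  _ = (r - 1 + (0:ℕ)) ^ (1-β) - (r - 1 + (n:ℕ)) ^ (1-β) := Finset.sum_range_sub' _ n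
  _ ≤ (r-1)^(1-β) := by
        simp only [Nat.cast_zero, add_zero]
        have : (0:ℝ) ≤ (r - 1 + (n:ℕ)) ^ (1-β) := by
          apply Real.rpow_nonneg
          have : (0:ℝ) ≤ (n:ℝ) := Nat.cast_nonneg n
          linarith
        linarith

lemma sum_rpow_lower {β : ℝ} (hβ : 1 < β) {r : ℝ} (hr : 0 < r) (n : ℕ) :
    (r^(1-β) - (r+n)^(1-β))/(β-1) ≤ ∑ k ∈ Finset.range n, (r + k) ^ (-β) := by
  have hb : (0:ℝ) < β - 1 := by linarith
  rw [div_le_iff₀ hb, Finset.sum_mul]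
  have h1 : ∑ k ∈ Finset.range n, ((fun k : ℕ => (r + k) ^ (1-β)) k
        - (fun k : ℕ => (r + k) ^ (1-β)) (k+1))
      ≤ ∑ k ∈ Finset.range n, (r + (k:ℝ)) ^ (-β) * (β-1) := by
    apply Finset.sum_le_sum
    intro k _
    have hx : (0:ℝ) < r + k := by
      have : (0:ℝ) ≤ (k:ℝ) := Nat.cast_nonneg k
      linarith
    have := (key_ineq hβ hx).2
    simp only [Nat.cast_add, Nat.cast_one]
    rw [show r + ((k:ℝ)+1) = r + (k:ℝ) + 1 by ring]
    nlinarith [this]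
  calc r ^ (1-β) - (r + (n:ℝ)) ^ (1-β)
      = (r + ((0:ℕ):ℝ)) ^ (1-β) - (r + (n:ℕ)) ^ (1-β) := by norm_num
  _ = ∑ k ∈ Finset.range n, ((fun k : ℕ => (r + k) ^ (1-β)) k
        - (fun k : ℕ => (r + k) ^ (1-β)) (k+1)) :=
      (Finset.sum_range_sub' (fun k : ℕ => (r + k) ^ (1-β)) n).symm
  _ ≤ _ := h1

lemma summable_shift {β : ℝ} (hβ : 1 < β) {m : ℕ} (hm : 1 ≤ m) :
    Summable (fun k : ℕ => ((m:ℝ) + k) ^ (-β)) := by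
  have h1 : Summable (fun n : ℕ => ((n:ℝ)) ^ (-β)) :=
    Real.summable_nat_rpow.mpr (by linarith)
  have h2 : Summable (fun n : ℕ => (((n+1:ℕ)):ℝ) ^ (-β)) :=
    (summable_nat_add_iff 1).mpr h1
  apply Summable.of_nonneg_of_le (fun k => by positivity) _ h2
  intro k
  apply Real.rpow_le_rpow_of_nonpos (by positivity) _ (by linarith)
  push_cast
  have : (1:ℝ) ≤ m := by exact_mod_cast hm
  linarith

lemma tsum_rpow_le {β : ℝ} (hβ : 1 < β) {m : ℕ} (hm : 2 ≤ m) :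
    ∑' k : ℕ, ((m:ℝ) + k) ^ (-β) ≤ ((m:ℝ)-1)^(1-β)/(β-1) := by
  refine Summable.tsum_le_of_sum_range_le (summable_shift hβ (by omega)) fun n => ?_
  exact sum_rpow_upper hβ (by exact_mod_cast hm) n

lemma potter {L : ℝ → ℝ} {δ : ℝ} (hδ0 : 0 < δ) (hδ1 : δ ≤ 1)
    (hLslow2 : Tendsto (fun t => L (2 * t) / L t) atTop (nhds 1))
    (hLpos : ∀ᶠ t in atTop, 0 < L t)
    (hLmono : ∃ T : ℝ, MonotoneOn L (Set.Ici T) ∨ AntitoneOn L (Set.Ici T)) :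
    ∃ U : ℝ, 1 ≤ U ∧ (∀ t, U ≤ t → 0 < L t) ∧
      (∀ u s, U ≤ u → u ≤ s → L s ≤ 2 * (s/u)^δ * L u) ∧
      (∀ u t s, U ≤ u → u ≤ t → t ≤ s →
        min (L u) (L s) ≤ L t ∧ L t ≤ max (L u) (L s)) := by
  obtain ⟨T₂, hT₂⟩ := eventually_atTop.mp hLpos
  obtain ⟨T, hmono⟩ := hLmono
  rcases hmono with hmono | hanti
  · -- monotone case
    have h1lt : (1:ℝ) < 2 ^ δ := Real.one_lt_rpow_iff_of_pos (by norm_num) |>.mpr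
      (Or.inl ⟨by norm_num, hδ0⟩)
    have hev : ∀ᶠ t in atTop, L (2 * t) / L t < 2 ^ δ :=
      hLslow2.eventually_lt_const h1lt
    obtain ⟨U₁, hU₁⟩ := eventually_atTop.mp hev
    set U := max (max T 1) (max U₁ T₂) with hU
    have hUT : T ≤ U := le_trans (le_max_left T 1) (le_max_left _ _)
    have hU1 : (1:ℝ) ≤ U := le_trans (le_max_right T 1) (le_max_left _ _)
    have hUU₁ : U₁ ≤ U := le_trans (le_max_left U₁ T₂) (le_max_right _ _)
    have hUT₂ : T₂ ≤ U := le_trans (le_max_right U₁ T₂) (le_max_right _ _)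
    have hLp : ∀ t, U ≤ t → 0 < L t := fun t ht => hT₂ t (le_trans hUT₂ ht)
    refine ⟨U, hU1, hLp, ?_, ?_⟩
    swap
    · intro u t s hu hut hts
      have hTu : T ≤ u := le_trans hUT hu
      have hmem_u : u ∈ Set.Ici T := Set.mem_Ici.mpr hTu
      have hmem_t : t ∈ Set.Ici T := Set.mem_Ici.mpr (le_trans hTu hut)
      have hmem_s : s ∈ Set.Ici T := Set.mem_Ici.mpr (le_trans hTu (le_trans hut hts))
      exact ⟨le_trans (min_le_left _ _) (hmono hmem_u hmem_t hut),
        le_trans (hmono hmem_t hmem_s hts) (le_max_right _ _)⟩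
    have hdbl : ∀ t, U ≤ t → L (2 * t) ≤ 2 ^ δ * L t := by
      intro t ht
      have h := hU₁ t (le_trans hUU₁ ht)
      have := hLp t ht
      rw [div_lt_iff₀ this] at h
      linarith
    intro u s hu hus
    have hu0 : (0:ℝ) < u := lt_of_lt_of_le one_pos (le_trans hU1 hu)
    have hs0 : (0:ℝ) < s := lt_of_lt_of_le hu0 hus
    -- inductive claim
    have claim : ∀ n : ℕ, ∀ s', u ≤ s' → s' ≤ (2:ℝ) ^ (n:ℝ) * u →
        L s' ≤ 2 ^ (δ * n) * L u := by
      intro n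
      induction n with
      | zero =>
        intro s' h1 h2
        simp only [Nat.cast_zero, Real.rpow_zero, one_mul, mul_zero] at *
        have : s' = u := le_antisymm h2 h1
        rw [this]
      | succ n ih =>
        intro s' h1 h2
        by_cases hcase : s' ≤ (2:ℝ) ^ (n:ℝ) * u
        · have := ih s' h1 hcase
          have hmono2 : (2:ℝ) ^ (δ * n) ≤ 2 ^ (δ * (n+1)) :=
            Real.rpow_le_rpow_of_exponent_le (by norm_num) (by nlinarith)
          have hLu := hLp u hu
          push_cast
          nlinarith
        · push_neg at hcase
          have h2n : (1:ℝ) ≤ (2:ℝ) ^ (n:ℝ) := Real.one_le_rpow (by norm_num) (by positivity)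
          have hup : u ≤ (2:ℝ) ^ (n:ℝ) * u := by nlinarith
          have hstep : L ((2:ℝ) ^ (n:ℝ) * u) ≤ 2 ^ (δ * n) * L u :=
            ih _ hup (le_refl _)
          have hdbl2 : L (2 * ((2:ℝ) ^ (n:ℝ) * u)) ≤ 2 ^ δ * L ((2:ℝ) ^ (n:ℝ) * u) :=
            hdbl _ (le_trans hu hup)
          have hsle : s' ≤ 2 * ((2:ℝ) ^ (n:ℝ) * u) := by
            have : (2:ℝ) ^ ((n:ℝ)+1) = 2 * (2:ℝ) ^ (n:ℝ) := by
              rw [Real.rpow_add_one (by norm_num)]; ring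
            push_cast at h2 ⊢
            rw [this] at h2
            linarith
          have hLmono : L s' ≤ L (2 * ((2:ℝ) ^ (n:ℝ) * u)) := by
            apply hmono _ _ hsle
            · exact Set.mem_Ici.mpr (le_trans hUT (le_trans hu h1))
            · exact Set.mem_Ici.mpr (le_trans hUT (le_trans hu (le_trans h1 hsle)))
          have hpos2n : (0:ℝ) < L ((2:ℝ) ^ (n:ℝ) * u) := hLp _ (le_trans hu hup)
          have h2δpos : (0:ℝ) < (2:ℝ) ^ δ := by positivity
          have hfin : (2:ℝ) ^ δ * 2 ^ (δ * n) = 2 ^ (δ * (n+1)) := by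
            rw [← Real.rpow_add (by norm_num)]; ring_nf
          calc L s' ≤ 2 ^ δ * L ((2:ℝ) ^ (n:ℝ) * u) := le_trans hLmono hdbl2
          _ ≤ 2 ^ δ * (2 ^ (δ * n) * L u) := by nlinarith
          _ = 2 ^ (δ * ((n:ℝ)+1)) * L u := by rw [← mul_assoc, hfin]
          _ = 2 ^ (δ * ((n+1:ℕ):ℝ)) * L u := by push_cast; ring_nf
    -- choose n
    set x := s / u with hx
    have hx1 : (1:ℝ) ≤ x := (one_le_div hu0).mpr hus
    have hx0 : (0:ℝ) < x := lt_of_lt_of_le one_pos hx1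
    set lg := Real.logb 2 x with hlg
    have hlg0 : 0 ≤ lg := Real.logb_nonneg (by norm_num) hx1
    set n := ⌊lg⌋₊ + 1 with hn
    have hlgn : lg < (n:ℝ) := by
      rw [hn]
      push_cast
      exact Nat.lt_floor_add_one lg
    have hsn : s ≤ (2:ℝ) ^ (n:ℝ) * u := by
      have h2lg : (2:ℝ) ^ lg = x := Real.rpow_logb (by norm_num) (by norm_num) hx0
      have hxl : x < (2:ℝ) ^ (n:ℝ) := by
        rw [← h2lg]
        exact Real.rpow_lt_rpow_left_iff (by norm_num) |>.mpr hlgn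
      rw [hx, div_lt_iff₀ hu0] at hxl
      linarith
    have hmain := claim n s hus hsn
    have hbound : (2:ℝ) ^ (δ * n) ≤ 2 * x ^ δ := by
      have h1 : δ * (n:ℝ) ≤ δ * lg + δ := by
        have : (n:ℝ) ≤ lg + 1 := by
          rw [hn]; push_cast
          have := Nat.floor_le hlg0
          linarith
        nlinarith
      have h2 : (2:ℝ) ^ (δ * (n:ℝ)) ≤ 2 ^ (δ * lg + δ) :=
        Real.rpow_le_rpow_of_exponent_le (by norm_num) h1
      have h3 : (2:ℝ) ^ (δ * lg + δ) = (2 ^ lg) ^ δ * 2 ^ δ := by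
        rw [Real.rpow_add (by norm_num), mul_comm δ lg, Real.rpow_mul (by norm_num)]
      have h4 : (2:ℝ) ^ lg = x := Real.rpow_logb (by norm_num) (by norm_num) hx0
      have h5 : (2:ℝ) ^ δ ≤ 2 := by
        calc (2:ℝ) ^ δ ≤ 2 ^ (1:ℝ) := Real.rpow_le_rpow_of_exponent_le (by norm_num) hδ1
        _ = 2 := Real.rpow_one 2
      have hxδ : (0:ℝ) ≤ x ^ δ := by positivity
      calc (2:ℝ) ^ (δ * (n:ℝ)) ≤ (2 ^ lg) ^ δ * 2 ^ δ := by rw [← h3]; exact h2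
      _ = x ^ δ * 2 ^ δ := by rw [h4]
      _ ≤ 2 * x ^ δ := by nlinarith
    have hLu := hLp u hu
    calc L s ≤ 2 ^ (δ * n) * L u := hmain
    _ ≤ 2 * x ^ δ * L u := by nlinarith
  · -- antitone case
    refine ⟨max (max T 1) T₂, le_trans (le_max_right T 1) (le_max_left _ _),
      fun t ht => hT₂ t (le_trans (le_max_right _ T₂) ht), ?_, ?_⟩
    swap
    · intro u t s hu hut hts
      have hTu : T ≤ u := le_trans (le_trans (le_max_left T 1) (le_max_left _ _)) hu
      have hmem_u : u ∈ Set.Ici T := Set.mem_Ici.mpr hTu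
      have hmem_t : t ∈ Set.Ici T := Set.mem_Ici.mpr (le_trans hTu hut)
      have hmem_s : s ∈ Set.Ici T := Set.mem_Ici.mpr (le_trans hTu (le_trans hut hts))
      exact ⟨le_trans (min_le_right _ _) (hanti hmem_t hmem_s hts),
        le_trans (hanti hmem_u hmem_t hut) (le_max_left _ _)⟩
    intro u s hu hus
    have hUT : T ≤ max (max T 1) T₂ := le_trans (le_max_left T 1) (le_max_left _ _)
    have hU1 : (1:ℝ) ≤ max (max T 1) T₂ := le_trans (le_max_right T 1) (le_max_left _ _)
    have hu0 : (0:ℝ) < u := lt_of_lt_of_le one_pos (le_trans hU1 hu)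
    have hLs : L s ≤ L u := hanti (Set.mem_Ici.mpr (le_trans hUT hu))
      (Set.mem_Ici.mpr (le_trans hUT (le_trans hu hus))) hus
    have hLu : 0 < L u := hT₂ u (le_trans (le_max_right _ T₂) hu)
    have hxδ : (1:ℝ) ≤ (s/u) ^ δ :=
      Real.one_le_rpow ((one_le_div hu0).mpr hus) (le_of_lt hδ0)
    nlinarith


set_option maxHeartbeats 1000000 in
/-- If the survival probabilities satisfy `p j = L j * j^{-α}` for `j ≥ 1` with
`α ∈ (1,2)` and `L` slowly varying and ultimately monotone, then the autocovariance
`γ(r) = σε² Σ_{k ≥ r} p_k` of Parke's process satisfies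
`γ(r) ~ σε² L(r) r^{1-α}/(α-1)` as `r → ∞` (so it is regularly varying of index
`2H - 2` with `H = (3-α)/2`). -/
theorem parke_autocov_regularly_varying
    (α : ℝ) (hα : 1 < α ∧ α < 2)
    (L : ℝ → ℝ)
    (hLbdd : ∀ b : ℝ, ∃ M : ℝ, ∀ t ∈ Set.Icc (0 : ℝ) b, |L t| ≤ M)
    (hLslow : ∀ a : ℝ, 0 < a → Tendsto (fun t => L (a * t) / L t) atTop (nhds 1))
    (hLpos : ∀ᶠ t in atTop, 0 < L t)
    (hLmono : ∃ T : ℝ, MonotoneOn L (Set.Ici T) ∨ AntitoneOn L (Set.Ici T))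
    (p : ℕ → ℝ) (hp : ∀ j : ℕ, 1 ≤ j → p j = L j * (j : ℝ) ^ (-α))
    (σε2 : ℝ) (hσ : 0 < σε2)
    (γ : ℕ → ℝ) (hγ : ∀ r : ℕ, γ r = σε2 * ∑' k : ℕ, p (r + k)) :
    Tendsto (fun r : ℕ =>
        γ r / (σε2 * L r * (r : ℝ) ^ (1 - α) / (α - 1))) atTop (nhds 1) := by
  obtain ⟨hα1, hα2⟩ := hα
  have hα1p : (0:ℝ) < α - 1 := by linarith
  obtain ⟨δ, hδdef⟩ : ∃ δ : ℝ, δ = (α - 1) / 2 := ⟨_, rfl⟩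
  have hδ0 : 0 < δ := by rw [hδdef]; linarith
  have hδ1 : δ ≤ 1 := by rw [hδdef]; linarith
  have hβ : 1 < α - δ := by rw [hδdef]; linarith
  have hβ1p : (0:ℝ) < α - δ - 1 := by linarith
  obtain ⟨U, hU1, hLp, hPot, hSand⟩ :=
    potter hδ0 hδ1 (hLslow 2 (by norm_num)) hLpos hLmono
  obtain ⟨K, hKdef⟩ : ∃ K : ℝ, K = (2:ℝ) ^ (α - δ) / (α - δ - 1) := ⟨_, rfl⟩
  have hKpos : 0 < K := by
    rw [hKdef]
    exact div_pos (Real.rpow_pos_of_pos (by norm_num) _) hβ1p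
  -- nonnegativity of terms
  have hterm0 : ∀ j : ℕ, U ≤ (j:ℝ) → 0 ≤ p j := by
    intro j hj
    have hj1 : 1 ≤ j := by exact_mod_cast le_trans hU1 hj
    rw [hp j hj1]
    have := hLp (j:ℝ) hj
    positivity
  -- key termwise upper bound
  have hterm : ∀ m k : ℕ, U ≤ (m:ℝ) →
      p (m + k) ≤ (2 * L m * (m:ℝ) ^ (-δ)) * ((m:ℝ) + (k:ℝ)) ^ (-(α - δ)) := by
    intro m k hm
    have hm0 : (0:ℝ) < m := lt_of_lt_of_le one_pos (le_trans hU1 hm)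
    have hj0 : (0:ℝ) < (m:ℝ) + k := by
      have : (0:ℝ) ≤ (k:ℝ) := Nat.cast_nonneg k
      linarith
    have hjge : (m:ℝ) ≤ (m:ℝ) + k := by
      have : (0:ℝ) ≤ (k:ℝ) := Nat.cast_nonneg k
      linarith
    have hj1 : 1 ≤ m + k := by
      have h1 : (1:ℝ) ≤ (m:ℝ) := le_trans hU1 hm
      have : 1 ≤ m := by exact_mod_cast h1
      omega
    have hcast : ((m + k : ℕ):ℝ) = (m:ℝ) + (k:ℝ) := by push_cast; ring
    rw [hp (m + k) hj1, hcast]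
    have hLle : L ((m:ℝ) + k) ≤ 2 * (((m:ℝ)+k)/(m:ℝ)) ^ δ * L m := hPot m _ hm hjge
    have hxα : (0:ℝ) ≤ ((m:ℝ) + k) ^ (-α) := Real.rpow_nonneg (le_of_lt hj0) _
    have halg : (((m:ℝ)+k)/(m:ℝ)) ^ δ * ((m:ℝ)+k) ^ (-α)
        = (m:ℝ) ^ (-δ) * ((m:ℝ) + k) ^ (-(α - δ)) := by
      have e1 : (((m:ℝ)+k)/(m:ℝ)) ^ δ = ((m:ℝ)+k) ^ δ * (((m:ℝ)) ^ δ)⁻¹ := by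
        rw [Real.div_rpow (le_of_lt hj0) (le_of_lt hm0), div_eq_mul_inv]
      have e2 : ((m:ℝ)+k) ^ δ * ((m:ℝ)+k) ^ (-α) = ((m:ℝ)+k) ^ (-(α - δ)) := by
        rw [← Real.rpow_add hj0]; congr 1; ring
      have e3 : (((m:ℝ)) ^ δ)⁻¹ = (m:ℝ) ^ (-δ) := (Real.rpow_neg (le_of_lt hm0) δ).symm
      calc (((m:ℝ)+k)/(m:ℝ)) ^ δ * ((m:ℝ)+k) ^ (-α)
          = (((m:ℝ)+k) ^ δ * ((m:ℝ)+k) ^ (-α)) * (((m:ℝ)) ^ δ)⁻¹ := by rw [e1]; ring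
      _ = ((m:ℝ)+k) ^ (-(α - δ)) * (m:ℝ) ^ (-δ) := by rw [e2, e3]
      _ = (m:ℝ) ^ (-δ) * ((m:ℝ) + k) ^ (-(α - δ)) := by ring
    calc L ((m:ℝ) + k) * ((m:ℝ)+k) ^ (-α)
        ≤ (2 * (((m:ℝ)+k)/(m:ℝ)) ^ δ * L m) * ((m:ℝ)+k) ^ (-α) :=
          mul_le_mul_of_nonneg_right hLle hxα
    _ = (2 * L m * (m:ℝ) ^ (-δ)) * ((m:ℝ) + (k:ℝ)) ^ (-(α - δ)) := by
          linear_combination (2 * L (m:ℝ)) * halg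
  -- summability
  have hsummable : ∀ m : ℕ, U ≤ (m:ℝ) → Summable (fun k => p (m + k)) := by
    intro m hm
    have hm1 : 1 ≤ m := by
      have : (1:ℝ) ≤ (m:ℝ) := le_trans hU1 hm
      exact_mod_cast this
    refine Summable.of_nonneg_of_le
      (fun k => hterm0 (m+k) ?_) (fun k => hterm m k hm)
      (((summable_shift hβ hm1).mul_left (2 * L m * (m:ℝ) ^ (-δ))))
    push_cast
    have : (0:ℝ) ≤ (k:ℝ) := Nat.cast_nonneg k
    linarith
  -- tail bound
  have htail : ∀ m : ℕ, U ≤ (m:ℝ) → 2 ≤ m →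
      (∑' k : ℕ, p (m + k)) ≤ K * L m * (m:ℝ) ^ (1 - α) := by
    intro m hm hm2
    have hm1 : 1 ≤ m := by omega
    have hm0 : (0:ℝ) < m := lt_of_lt_of_le one_pos (le_trans hU1 hm)
    have hLm : 0 < L m := hLp _ hm
    have hC0 : 0 ≤ 2 * L m * (m:ℝ) ^ (-δ) := by positivity
    have h1 : (∑' k : ℕ, p (m + k))
        ≤ ∑' k : ℕ, (2 * L m * (m:ℝ) ^ (-δ)) * ((m:ℝ) + (k:ℝ)) ^ (-(α - δ)) :=
      Summable.tsum_le_tsum (fun k => hterm m k hm) (hsummable m hm)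
        ((summable_shift hβ hm1).mul_left _)
    rw [tsum_mul_left] at h1
    have h2 : (∑' k : ℕ, ((m:ℝ) + (k:ℝ)) ^ (-(α - δ)))
        ≤ ((m:ℝ)-1) ^ (1-(α - δ)) / ((α - δ)-1) := tsum_rpow_le hβ hm2
    have h3 : ((m:ℝ)-1) ^ (1-(α-δ)) ≤ (2:ℝ) ^ ((α-δ)-1) * (m:ℝ) ^ (1-(α-δ)) := by
      have hhalf : (0:ℝ) < (m:ℝ)/2 := by linarith
      have hle : (m:ℝ)/2 ≤ (m:ℝ)-1 := by
        have : (2:ℝ) ≤ (m:ℝ) := by exact_mod_cast hm2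
        linarith
      have h4 : ((m:ℝ)-1) ^ (1-(α-δ)) ≤ ((m:ℝ)/2) ^ (1-(α-δ)) :=
        Real.rpow_le_rpow_of_nonpos hhalf hle (by linarith)
      have h5 : ((m:ℝ)/2) ^ (1-(α-δ)) = (m:ℝ) ^ (1-(α-δ)) / (2:ℝ) ^ (1-(α-δ)) :=
        Real.div_rpow (le_of_lt hm0) (by norm_num) _
      have h6 : (2:ℝ) ^ (1-(α-δ)) = ((2:ℝ) ^ ((α-δ)-1))⁻¹ := by
        rw [← Real.rpow_neg (by norm_num)]
        congr 1
        ring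
      rw [h5, h6, div_eq_mul_inv, inv_inv] at h4
      calc ((m:ℝ)-1) ^ (1-(α-δ)) ≤ (m:ℝ) ^ (1-(α-δ)) * (2:ℝ) ^ ((α-δ)-1) := h4
      _ = (2:ℝ) ^ ((α-δ)-1) * (m:ℝ) ^ (1-(α-δ)) := by ring
    have hmδ : (0:ℝ) ≤ (m:ℝ) ^ (-δ) := Real.rpow_nonneg (le_of_lt hm0) _
    have h7 : (∑' k : ℕ, p (m + k))
        ≤ (2 * L m * (m:ℝ) ^ (-δ)) * (((2:ℝ) ^ ((α-δ)-1) * (m:ℝ) ^ (1-(α-δ))) / ((α-δ)-1)) := by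
      refine le_trans h1 (mul_le_mul_of_nonneg_left ?_ hC0)
      refine le_trans h2 ?_
      gcongr
    refine le_trans h7 (le_of_eq ?_)
    have hpow1 : (m:ℝ) ^ (-δ) * (m:ℝ) ^ (1-(α-δ)) = (m:ℝ) ^ (1-α) := by
      rw [← Real.rpow_add hm0]
      congr 1
      ring
    have hpow2 : (2:ℝ) * (2:ℝ) ^ ((α-δ)-1) = (2:ℝ) ^ (α-δ) := by
      nth_rewrite 1 [← Real.rpow_one 2]
      rw [← Real.rpow_add (by norm_num)]
      congr 1
      ring
    calc 2 * L m * (m:ℝ) ^ (-δ) * (((2:ℝ) ^ ((α-δ)-1) * (m:ℝ) ^ (1-(α-δ))) / ((α-δ)-1))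
        = ((2:ℝ) * (2:ℝ) ^ ((α-δ)-1)) * L m * ((m:ℝ) ^ (-δ) * (m:ℝ) ^ (1-(α-δ))) / ((α-δ)-1) := by
          ring
    _ = (2:ℝ) ^ (α-δ) * L m * (m:ℝ) ^ (1-α) / ((α-δ)-1) := by rw [hpow1, hpow2]
    _ = K * L m * (m:ℝ) ^ (1-α) := by rw [hKdef]; ring
  -- limit facts
  have hshape : Tendsto (fun r : ℕ => (1 - 1/(r:ℝ)) ^ (1-α)) atTop (nhds 1) := by
    have hb : Tendsto (fun r : ℕ => 1 - 1/(r:ℝ)) atTop (nhds 1) := by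
      have h0 := tendsto_one_div_atTop_nhds_zero_nat (𝕜 := ℝ)
      have h2 := (tendsto_const_nhds (x := (1:ℝ)) (f := (atTop : Filter ℕ))).sub h0
      simpa using h2
    have hc : ContinuousAt (fun x : ℝ => x ^ (1-α)) 1 :=
      Real.continuousAt_rpow_const 1 (1-α) (Or.inl one_ne_zero)
    have := hc.tendsto.comp hb
    simpa [Function.comp_def, Real.one_rpow] using this
  have hA1tend : Tendsto (fun A : ℕ => ((A:ℝ)) ^ (1-α)) atTop (nhds 0) := by
    have h1 := tendsto_rpow_neg_atTop hα1p
    have h2 := h1.comp (tendsto_natCast_atTop_atTop (R := ℝ))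
    have h3 : (fun A : ℕ => ((A:ℝ)) ^ (-(α-1))) = fun A : ℕ => ((A:ℝ)) ^ (1-α) := by
      funext A; congr 1; ring
    rw [← h3]; exact h2
  rw [Metric.tendsto_nhds]
  intro ε hε
  obtain ⟨ε', hε'def⟩ : ∃ e : ℝ, e = min (ε/8) (1/2) := ⟨_, rfl⟩
  have hε'pos : 0 < ε' := by rw [hε'def]; positivity
  have hε'ε : ε' ≤ ε/8 := by rw [hε'def]; exact min_le_left _ _
  have hε'half : ε' ≤ 1/2 := by rw [hε'def]; exact min_le_right _ _
  -- choose A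
  have hAev : ∀ᶠ A : ℕ in atTop,
      ((A:ℝ)) ^ (1-α) ≤ ε/3 ∧ 2*K*(α-1)*((A:ℝ)) ^ (1-α) ≤ ε/3 ∧ 2 ≤ A := by
    have e1 : ∀ᶠ A : ℕ in atTop, ((A:ℝ)) ^ (1-α) ≤ ε/3 :=
      hA1tend.eventually_le_const (by positivity)
    have e2 : ∀ᶠ A : ℕ in atTop, 2*K*(α-1)*((A:ℝ)) ^ (1-α) ≤ ε/3 := by
      have h4 := hA1tend.const_mul (2*K*(α-1))
      rw [mul_zero] at h4
      exact h4.eventually_le_const (by positivity)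
    exact e1.and (e2.and (eventually_ge_atTop 2))
  obtain ⟨A, hA1ε, hAKε, hA2⟩ := hAev.exists
  have hA0n : 0 < A := by omega
  have hA0R : (0:ℝ) < (A:ℝ) := by exact_mod_cast hA0n
  have hA2R : (2:ℝ) ≤ (A:ℝ) := by exact_mod_cast hA2
  -- r-eventual facts
  have hE1 : ∀ᶠ r : ℕ in atTop, U + 1 ≤ (r:ℝ) :=
    tendsto_natCast_atTop_atTop.eventually_ge_atTop (U+1)
  have hE2 : ∀ᶠ r : ℕ in atTop, |L ((A:ℝ)*(r:ℝ)) / L (r:ℝ) - 1| ≤ ε' := by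
    have hcomp := (hLslow (A:ℝ) hA0R).comp (tendsto_natCast_atTop_atTop (R := ℝ))
    have h5 := Metric.tendsto_nhds.mp hcomp ε' hε'pos
    filter_upwards [h5] with r hr
    simp only [Function.comp_apply, Real.dist_eq] at hr
    exact le_of_lt hr
  have hE3 : ∀ᶠ r : ℕ in atTop, (1 - 1/(r:ℝ)) ^ (1-α) ≤ 1 + ε' :=
    hshape.eventually_le_const (by linarith)
  filter_upwards [hE1, hE2, hE3] with r hr1 hr2 hr3
  -- basic facts about r
  have hrU : U ≤ (r:ℝ) := by linarith only [hr1, hU1]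
  have hr2R : (2:ℝ) ≤ (r:ℝ) := by linarith only [hr1, hU1]
  have hr0 : (0:ℝ) < (r:ℝ) := by linarith only [hr2R]
  have hr1n : 1 ≤ r := by
    have : (1:ℝ) ≤ (r:ℝ) := by linarith only [hr2R]
    exact_mod_cast this
  have hLr : 0 < L (r:ℝ) := hLp _ hrU
  have hrAr : r ≤ A*r := Nat.le_mul_of_pos_left r hA0n
  have hn : r + (A-1)*r = A*r := by
    rw [Nat.sub_mul, one_mul]
    exact Nat.add_sub_cancel' hrAr
  have hcastAr : ((A*r : ℕ):ℝ) = (A:ℝ)*(r:ℝ) := by push_cast; ring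
  have hArU : U ≤ ((A*r:ℕ):ℝ) := by
    rw [hcastAr]; nlinarith only [hrU, hA2R, hr0]
  have hAr2 : 2 ≤ A*r := le_trans hA2 (Nat.le_mul_of_pos_right A (by omega))
  have hLA : 0 < L ((A:ℝ)*(r:ℝ)) := by
    have := hLp _ hArU; rwa [hcastAr] at this
  -- split the sum
  have hsplit : (∑' k:ℕ, p (r+k))
      = (∑ k ∈ Finset.range ((A-1)*r), p (r+k)) + ∑' k:ℕ, p (A*r + k) := by
    have h := Summable.sum_add_tsum_nat_add (f := fun k => p (r + k)) ((A-1)*r) (hsummable r hrU)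
    rw [← h]
    congr 1
    apply tsum_congr
    intro i
    show p (r + (i + (A-1)*r)) = p (A*r + i)
    congr 1
    have h7 : r + (i + (A-1)*r) = (r + (A-1)*r) + i := by ring
    rw [h7, hn]
  -- bounds on the finite sum
  have hupperS : (∑ k ∈ Finset.range ((A-1)*r), ((r:ℝ) + (k:ℝ))^(-α))
      ≤ ((r:ℝ)-1)^(1-α)/(α-1) := sum_rpow_upper hα1 hr2R _
  have hlowerS : ((r:ℝ)^(1-α) - ((A:ℝ)*(r:ℝ))^(1-α))/(α-1)
      ≤ ∑ k ∈ Finset.range ((A-1)*r), ((r:ℝ) + (k:ℝ))^(-α) := by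
    have h := sum_rpow_lower hα1 hr0 ((A-1)*r)
    have hcast2 : (r:ℝ) + (((A-1)*r : ℕ):ℝ) = (A:ℝ)*(r:ℝ) := by
      rw [← hcastAr]
      exact_mod_cast hn
    rwa [hcast2] at h
  have hS0 : 0 ≤ ∑ k ∈ Finset.range ((A-1)*r), ((r:ℝ) + (k:ℝ))^(-α) := by
    apply Finset.sum_nonneg
    intro k _
    apply Real.rpow_nonneg
    positivity
  -- sandwich for the finite sum
  have hMterm : ∀ k ∈ Finset.range ((A-1)*r),
      min (L (r:ℝ)) (L ((A:ℝ)*(r:ℝ))) * ((r:ℝ) + (k:ℝ))^(-α) ≤ p (r+k) ∧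
      p (r+k) ≤ max (L (r:ℝ)) (L ((A:ℝ)*(r:ℝ))) * ((r:ℝ) + (k:ℝ))^(-α) := by
    intro k hk
    have hk' : k < (A-1)*r := Finset.mem_range.mp hk
    have hjge1 : 1 ≤ r + k := by omega
    have hcastj : ((r+k:ℕ):ℝ) = (r:ℝ)+(k:ℝ) := by push_cast; ring
    have hjle : (r:ℝ)+(k:ℝ) ≤ (A:ℝ)*(r:ℝ) := by
      have h6 : r + k ≤ A*r := by omega
      calc (r:ℝ)+(k:ℝ) = ((r+k:ℕ):ℝ) := by push_cast; ring
      _ ≤ ((A*r:ℕ):ℝ) := by exact_mod_cast h6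
      _ = _ := hcastAr
    have hjger : (r:ℝ) ≤ (r:ℝ)+(k:ℝ) := by
      have : (0:ℝ) ≤ (k:ℝ) := Nat.cast_nonneg k
      linarith only [this]
    have hb := hSand (r:ℝ) ((r:ℝ)+(k:ℝ)) ((A:ℝ)*(r:ℝ)) hrU hjger hjle
    have hxnn : (0:ℝ) ≤ ((r:ℝ) + (k:ℝ))^(-α) := Real.rpow_nonneg (by positivity) _
    rw [hp _ hjge1, hcastj]
    exact ⟨mul_le_mul_of_nonneg_right hb.1 hxnn,
      mul_le_mul_of_nonneg_right hb.2 hxnn⟩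
  have hMup : (∑ k ∈ Finset.range ((A-1)*r), p (r+k))
      ≤ max (L (r:ℝ)) (L ((A:ℝ)*(r:ℝ))) *
        ∑ k ∈ Finset.range ((A-1)*r), ((r:ℝ) + (k:ℝ))^(-α) := by
    rw [Finset.mul_sum]
    exact Finset.sum_le_sum (fun k hk => (hMterm k hk).2)
  have hMlow : min (L (r:ℝ)) (L ((A:ℝ)*(r:ℝ))) *
        (∑ k ∈ Finset.range ((A-1)*r), ((r:ℝ) + (k:ℝ))^(-α))
      ≤ ∑ k ∈ Finset.range ((A-1)*r), p (r+k) := by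
    rw [Finset.mul_sum]
    exact Finset.sum_le_sum (fun k hk => (hMterm k hk).1)
  -- L comparison
  have habs := abs_le.mp hr2
  have hdivLA : L ((A:ℝ)*(r:ℝ)) = (L ((A:ℝ)*(r:ℝ)) / L (r:ℝ)) * L (r:ℝ) :=
    (div_mul_cancel₀ _ (ne_of_gt hLr)).symm
  have hLAub : L ((A:ℝ)*(r:ℝ)) ≤ (1+ε') * L (r:ℝ) := by
    have h8 : L ((A:ℝ)*(r:ℝ)) / L (r:ℝ) ≤ 1+ε' := by linarith only [habs.2]
    exact (div_le_iff₀ hLr).mp h8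
  have hLAlb : (1-ε') * L (r:ℝ) ≤ L ((A:ℝ)*(r:ℝ)) := by
    have h8 : 1-ε' ≤ L ((A:ℝ)*(r:ℝ)) / L (r:ℝ) := by linarith only [habs.1]
    exact (le_div_iff₀ hLr).mp h8
  have hLmax : max (L (r:ℝ)) (L ((A:ℝ)*(r:ℝ))) ≤ (1+ε') * L (r:ℝ) :=
    max_le (by nlinarith only [hε'pos, hLr]) hLAub
  have hLminb : (1-ε') * L (r:ℝ) ≤ min (L (r:ℝ)) (L ((A:ℝ)*(r:ℝ))) :=
    le_min (by nlinarith only [hε'pos, hLr]) hLAlb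
  have hLmin0 : 0 ≤ min (L (r:ℝ)) (L ((A:ℝ)*(r:ℝ))) := (lt_min hLr hLA).le
  -- powers
  have hX : 0 < (r:ℝ)^(1-α) := Real.rpow_pos_of_pos hr0 _
  have hA10 : 0 < (A:ℝ)^(1-α) := Real.rpow_pos_of_pos hA0R _
  have hA1le1 : (A:ℝ)^(1-α) ≤ 1 :=
    Real.rpow_le_one_of_one_le_of_nonpos (by linarith only [hA2R]) (by linarith only [hα1])
  have hArpow : ((A:ℝ)*(r:ℝ))^(1-α) = (A:ℝ)^(1-α) * (r:ℝ)^(1-α) :=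
    Real.mul_rpow (le_of_lt hA0R) (le_of_lt hr0)
  have hrm1 : ((r:ℝ)-1)^(1-α) ≤ (1+ε') * (r:ℝ)^(1-α) := by
    have hfrac0 : (0:ℝ) ≤ 1 - 1/(r:ℝ) := by
      rw [sub_nonneg, div_le_one hr0]; linarith only [hr2R]
    have hfact : (r:ℝ)-1 = (1-1/(r:ℝ))*(r:ℝ) := by field_simp
    have heq : ((r:ℝ)-1)^(1-α) = (1-1/(r:ℝ))^(1-α) * (r:ℝ)^(1-α) := by
      rw [hfact, Real.mul_rpow hfrac0 (le_of_lt hr0)]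
    rw [heq]
    exact mul_le_mul_of_nonneg_right hr3 (le_of_lt hX)
  -- tail
  have htailr : (∑' k:ℕ, p (A*r + k))
      ≤ K * L ((A:ℝ)*(r:ℝ)) * ((A:ℝ)^(1-α) * (r:ℝ)^(1-α)) := by
    have h := htail (A*r) hArU hAr2
    rw [hcastAr, hArpow] at h
    exact h
  have htail0 : 0 ≤ ∑' k:ℕ, p (A*r + k) := by
    apply tsum_nonneg
    intro k
    apply hterm0
    have := hArU
    push_cast at this ⊢
    have hk0 : (0:ℝ) ≤ (k:ℝ) := Nat.cast_nonneg k
    linarith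
  -- denominator
  have hDpos : 0 < L (r:ℝ) * (r:ℝ)^(1-α) / (α-1) := div_pos (mul_pos hLr hX) hα1p
  have hLrX : 0 < L (r:ℝ) * (r:ℝ)^(1-α) := mul_pos hLr hX
  -- reduce goal
  have hratio : γ r / (σε2 * L (r:ℝ) * (r:ℝ)^(1-α) / (α-1))
      = (∑' k:ℕ, p (r+k)) / (L (r:ℝ) * (r:ℝ)^(1-α) / (α-1)) := by
    rw [hγ r,
      show σε2 * L (r:ℝ) * (r:ℝ)^(1-α) / (α-1)
        = σε2 * (L (r:ℝ) * (r:ℝ)^(1-α) / (α-1)) by ring,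
      mul_div_mul_left _ _ (ne_of_gt hσ)]
  rw [Real.dist_eq, hratio]
  -- coefficient inequalities
  have hc0 : 0 < K*(α-1)*((A:ℝ)^(1-α)) := mul_pos (mul_pos hKpos hα1p) hA10
  have hcoefu : (1+ε')*(1+ε') + K*(1+ε')*(α-1)*((A:ℝ)^(1-α)) < 1+ε := by
    nlinarith only [mul_le_mul_of_nonneg_left hε'half hε'pos.le,
      mul_le_mul_of_nonneg_right hε'half hc0.le, hc0, hε'pos, hε'ε, hAKε, hε]
  have hcoefl : 1-ε < (1-ε')*(1-(A:ℝ)^(1-α)) := by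
    nlinarith only [mul_nonneg hε'pos.le hA10.le, hε'ε, hA1ε, hε, hε'pos]
  -- upper bound
  have hub : (∑' k:ℕ, p (r+k)) / (L (r:ℝ) * (r:ℝ)^(1-α) / (α-1)) < 1 + ε := by
    rw [div_lt_iff₀ hDpos, hsplit]
    have hSup2 : (∑ k ∈ Finset.range ((A-1)*r), ((r:ℝ) + (k:ℝ))^(-α))
        ≤ ((1+ε') * (r:ℝ)^(1-α))/(α-1) := by
      refine le_trans hupperS ?_
      gcongr
    have hup1 : (∑ k ∈ Finset.range ((A-1)*r), p (r+k))
        ≤ ((1+ε') * L (r:ℝ)) * (((1+ε') * (r:ℝ)^(1-α))/(α-1)) := by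
      refine le_trans hMup (mul_le_mul hLmax hSup2 hS0 ?_)
      nlinarith only [hε'pos, hLr]
    have hup2 : (∑' k:ℕ, p (A*r + k))
        ≤ K * ((1+ε') * L (r:ℝ)) * ((A:ℝ)^(1-α) * (r:ℝ)^(1-α)) := by
      refine le_trans htailr (mul_le_mul_of_nonneg_right ?_ (by positivity))
      exact mul_le_mul_of_nonneg_left hLAub hKpos.le
    have hfin : ((1+ε') * L (r:ℝ)) * (((1+ε') * (r:ℝ)^(1-α))/(α-1))
        + K * ((1+ε') * L (r:ℝ)) * ((A:ℝ)^(1-α) * (r:ℝ)^(1-α))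
        < (1+ε) * (L (r:ℝ) * (r:ℝ)^(1-α) / (α-1)) := by
      rw [show ((1+ε') * L (r:ℝ)) * (((1+ε') * (r:ℝ)^(1-α))/(α-1))
          = ((1+ε')*(1+ε')*(L (r:ℝ) * (r:ℝ)^(1-α)))/(α-1) by ring,
        show K * ((1+ε') * L (r:ℝ)) * ((A:ℝ)^(1-α) * (r:ℝ)^(1-α))
          = (K*(1+ε')*(α-1)*((A:ℝ)^(1-α))*(L (r:ℝ) * (r:ℝ)^(1-α)))/(α-1) by
            rw [eq_div_iff (ne_of_gt hα1p)]; ring,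
        show (1+ε) * (L (r:ℝ) * (r:ℝ)^(1-α) / (α-1))
          = ((1+ε)*(L (r:ℝ) * (r:ℝ)^(1-α)))/(α-1) by ring,
        ← add_div]
      apply (div_lt_div_iff_of_pos_right hα1p).mpr
      nlinarith only [mul_lt_mul_of_pos_right hcoefu hLrX]
    linarith only [hup1, hup2, hfin, hsplit]
  -- lower bound
  have hlb : 1 - ε < (∑' k:ℕ, p (r+k)) / (L (r:ℝ) * (r:ℝ)^(1-α) / (α-1)) := by
    rw [lt_div_iff₀ hDpos, hsplit]
    have hSlow2 : ((r:ℝ)^(1-α) - (A:ℝ)^(1-α) * (r:ℝ)^(1-α))/(α-1)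
        ≤ ∑ k ∈ Finset.range ((A-1)*r), ((r:ℝ) + (k:ℝ))^(-α) := by
      rw [← hArpow]
      exact hlowerS
    have hnum0 : (0:ℝ) ≤ ((r:ℝ)^(1-α) - (A:ℝ)^(1-α) * (r:ℝ)^(1-α))/(α-1) := by
      apply div_nonneg _ hα1p.le
      nlinarith only [hA1le1, hX, hA10]
    have hlow1 : ((1-ε') * L (r:ℝ)) * (((r:ℝ)^(1-α) - (A:ℝ)^(1-α) * (r:ℝ)^(1-α))/(α-1))
        ≤ ∑ k ∈ Finset.range ((A-1)*r), p (r+k) := by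
      refine le_trans (mul_le_mul hLminb hSlow2 hnum0 hLmin0) hMlow
    have hfin : (1-ε) * (L (r:ℝ) * (r:ℝ)^(1-α) / (α-1))
        < ((1-ε') * L (r:ℝ)) * (((r:ℝ)^(1-α) - (A:ℝ)^(1-α) * (r:ℝ)^(1-α))/(α-1)) := by
      rw [show (1-ε) * (L (r:ℝ) * (r:ℝ)^(1-α) / (α-1))
          = ((1-ε)*(L (r:ℝ) * (r:ℝ)^(1-α)))/(α-1) by ring,
        show ((1-ε') * L (r:ℝ)) * (((r:ℝ)^(1-α) - (A:ℝ)^(1-α) * (r:ℝ)^(1-α))/(α-1))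
          = (((1-ε')*(1-(A:ℝ)^(1-α)))*(L (r:ℝ) * (r:ℝ)^(1-α)))/(α-1) by ring]
      apply (div_lt_div_iff_of_pos_right hα1p).mpr
      nlinarith only [mul_lt_mul_of_pos_right hcoefl hLrX]
    linarith only [hfin, hlow1, htail0]
  rw [abs_lt]
  constructor <;> linarith only [hub, hlb]
end

section
/- The Taqqu-Levy renewal-reward process X_t = Σ_{k=0}^∞ W_k 1_{S_{k-1} ≤ t < S_k} has mean zero and covariance cov(X_0, X_r) = σ_W² P(S_0 ≥ r) = μ^{-1} σ_W² E[(T_1 − r) 1_{T_1 ≥ r}]. -/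
open MeasureTheory ProbabilityTheory

section TLAux

variable {Ω : Type*} [MeasureSpace Ω] [IsProbabilityMeasure (ℙ : Measure Ω)]

omit [IsProbabilityMeasure (ℙ : Measure Ω)] in
lemma tl_sum_range_ite {M : Type*} [AddCommMonoid M] (a : ℕ → M) (k m : ℕ) (h : k ≤ m) :
    ∑ i ∈ Finset.range m, (if i < k then a i else 0) = ∑ i ∈ Finset.range k, a i := by
  rw [← Finset.sum_filter]
  congr 1
  ext i
  simp only [Finset.mem_filter, Finset.mem_range]
  omega

lemma tl_nat_tsum (r n : ℕ) :
    (∑' u : ℕ, (if u + r + 1 ≤ n then (1 : ENNReal) else 0)) = ((n - r : ℕ) : ENNReal) := by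
  rw [tsum_eq_sum (s := Finset.range (n - r))
    (by intro u hu; rw [if_neg]; simp only [Finset.mem_range] at hu; omega)]
  have h1 : ∀ u ∈ Finset.range (n - r), (if u + r + 1 ≤ n then (1 : ENNReal) else 0) = 1 := by
    intro u hu; rw [if_pos]; simp only [Finset.mem_range] at hu; omega
  rw [Finset.sum_congr rfl h1, Finset.sum_const, Finset.card_range, nsmul_eq_mul, mul_one]

omit [IsProbabilityMeasure (ℙ : Measure Ω)] in
lemma tl_indep_indicator {β : Type*} [MeasurableSpace β] {F : Ω → ℝ} {V : Ω → β} {B : Set β}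
    (h : IndepFun F V ℙ) (hB : MeasurableSet B) :
    IndepFun F ((V ⁻¹' B).indicator (1 : Ω → ℝ)) ℙ := by
  have heq : ((V ⁻¹' B).indicator (1 : Ω → ℝ)) = (B.indicator (1 : β → ℝ)) ∘ V := by
    funext ω; by_cases hω : V ω ∈ B <;> simp [Set.indicator_apply, hω]
  rw [heq]
  exact h.comp measurable_id (measurable_one.indicator hB)

lemma tl_integral_indicator {F : Ω → ℝ} {A : Set Ω} (hF : Integrable F ℙ) (hA : MeasurableSet A)
    (h : IndepFun F (A.indicator (1 : Ω → ℝ)) ℙ) :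
    ∫ ω, A.indicator F ω ∂ℙ = (∫ ω, F ω ∂ℙ) * (ℙ A).toReal := by
  have h1 : A.indicator F = F * A.indicator 1 := by
    funext ω; by_cases hω : ω ∈ A <;> simp [Set.indicator_apply, hω]
  rw [h1, h.integral_mul_eq_mul_integral hF.aestronglyMeasurable ((integrable_const (1:ℝ)).indicator hA).aestronglyMeasurable,
    integral_indicator_one hA, measureReal_def]

end TLAux

/-- the block of renewal data `(S0, T 1, …, T m)` as a single random vector -/
def tlV {Ω : Type*} (T : ℕ → Ω → ℕ) (S0 : Ω → ℕ) (m : ℕ) (ω : Ω) : ℝ × (Fin m → ℝ) :=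
  ((S0 ω : ℝ), fun i => (T (i.1 + 1) ω : ℝ))

/-- partial sums in the codomain of `tlV` -/
def tlsB (m k : ℕ) (p : ℝ × (Fin m → ℝ)) : ℝ :=
  p.1 + ∑ i : Fin m, (if i.1 < k then p.2 i else 0)

/-- the renewal event in the codomain of `tlV` -/
def tlB (m k : ℕ) (t : ℤ) : Set (ℝ × (Fin m → ℝ)) :=
  {p | (if k = 0 then (-1 : ℝ) else tlsB m (k - 1) p) ≤ (t : ℝ) ∧ (t : ℝ) < tlsB m k p}

/-- the renewal event in `Ω` -/
def tlA {Ω : Type*} (S : ℕ → Ω → ℤ) (k : ℕ) (t : ℤ) : Set Ω :=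
  {ω | (if k = 0 then (-1 : ℤ) else S (k - 1) ω) ≤ t ∧ t < S k ω}

lemma tlV_meas {Ω : Type*} [MeasurableSpace Ω] {T : ℕ → Ω → ℕ} {S0 : Ω → ℕ}
    (hTmeas : ∀ k, Measurable (T k)) (hS0meas : Measurable S0) (m : ℕ) :
    Measurable (tlV T S0 m) :=
  ((measurable_from_top : Measurable (Nat.cast : ℕ → ℝ)).comp hS0meas).prodMk
    (measurable_pi_lambda _ fun i =>
      (measurable_from_top : Measurable (Nat.cast : ℕ → ℝ)).comp (hTmeas (i.1 + 1)))

lemma tlsB_meas (m k : ℕ) : Measurable (tlsB m k) := by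
  apply Measurable.add measurable_fst
  apply Finset.measurable_sum
  intro i _
  by_cases h : i.1 < k
  · simp only [if_pos h]; exact (measurable_pi_apply i).comp measurable_snd
  · simp only [if_neg h]; exact measurable_const

lemma tlB_meas (m k : ℕ) (t : ℤ) : MeasurableSet (tlB m k t) := by
  have h1 : MeasurableSet {p : ℝ × (Fin m → ℝ) |
      (if k = 0 then (-1 : ℝ) else tlsB m (k - 1) p) ≤ (t : ℝ)} := by
    by_cases hk : k = 0
    · simp only [hk, if_true]
      by_cases h : (-1 : ℝ) ≤ (t : ℝ) <;> simp [h]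
    · simp only [if_neg hk]
      exact measurableSet_le (tlsB_meas m (k - 1)) measurable_const
  have h2 : MeasurableSet {p : ℝ × (Fin m → ℝ) | (t : ℝ) < tlsB m k p} :=
    measurableSet_lt measurable_const (tlsB_meas m k)
  exact h1.inter h2

lemma tlsB_V {Ω : Type*} (T : ℕ → Ω → ℕ) (S0 : Ω → ℕ) (S : ℕ → Ω → ℤ)
    (hSrep : ∀ k ω, S k ω = (S0 ω : ℤ) + ∑ i ∈ Finset.range k, (T (i + 1) ω : ℤ))
    (m k : ℕ) (hk : k ≤ m) (ω : Ω) :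
    tlsB m k (tlV T S0 m ω) = (S k ω : ℝ) := by
  have h0 : tlsB m k (tlV T S0 m ω)
      = (S0 ω : ℝ) + ∑ i : Fin m, (if i.1 < k then (T (i.1 + 1) ω : ℝ) else 0) := rfl
  rw [h0, Fin.sum_univ_eq_sum_range (fun i => if i < k then ((T (i + 1) ω : ℝ)) else 0) m,
    tl_sum_range_ite _ k m hk, hSrep k ω]
  push_cast
  ring

lemma tlA_eq {Ω : Type*} (T : ℕ → Ω → ℕ) (S0 : Ω → ℕ) (S : ℕ → Ω → ℤ)
    (hSrep : ∀ k ω, S k ω = (S0 ω : ℤ) + ∑ i ∈ Finset.range k, (T (i + 1) ω : ℤ))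
    (m k : ℕ) (t : ℤ) (hk : k ≤ m) :
    tlA S k t = tlV T S0 m ⁻¹' tlB m k t := by
  ext ω
  show ((if k = 0 then (-1 : ℤ) else S (k - 1) ω) ≤ t ∧ t < S k ω) ↔ _
  have h2 : (tlV T S0 m ω ∈ tlB m k t) ↔
      ((if k = 0 then (-1 : ℝ) else tlsB m (k - 1) (tlV T S0 m ω)) ≤ (t : ℝ) ∧
        (t : ℝ) < tlsB m k (tlV T S0 m ω)) := Iff.rfl
  rw [Set.mem_preimage, h2, tlsB_V T S0 S hSrep m k hk ω]
  by_cases hk0 : k = 0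
  · subst hk0
    simp only [if_true]
    constructor
    · rintro ⟨h1, h2'⟩; exact ⟨by exact_mod_cast h1, by exact_mod_cast h2'⟩
    · rintro ⟨h1, h2'⟩; exact ⟨by exact_mod_cast h1, by exact_mod_cast h2'⟩
  · rw [if_neg hk0, if_neg hk0, tlsB_V T S0 S hSrep m (k - 1) (by omega) ω]
    constructor <;> rintro ⟨h1, h2'⟩ <;>
      exact ⟨by exact_mod_cast h1, by exact_mod_cast h2'⟩

section TLIndep

variable {Ω : Type*} [MeasureSpace Ω] [IsProbabilityMeasure (ℙ : Measure Ω)]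

omit [IsProbabilityMeasure (ℙ : Measure Ω)] in
lemma tl_fmeas (T : ℕ → Ω → ℕ) (W : ℕ → Ω → ℝ) (S0 : Ω → ℕ)
    (hTmeas : ∀ k, Measurable (T k)) (hWmeas : ∀ k, Measurable (W k))
    (hS0meas : Measurable S0) :
    ∀ i : ℕ ⊕ (ℕ ⊕ Unit), Measurable ((Sum.elim (fun k => W k)
      (Sum.elim (fun k ω => (T k ω : ℝ)) (fun _ ω => (S0 ω : ℝ)))) i) := by
  rintro (a | b | c)
  · exact hWmeas a
  · exact (measurable_from_top : Measurable (Nat.cast : ℕ → ℝ)).comp (hTmeas b)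
  · exact (measurable_from_top : Measurable (Nat.cast : ℕ → ℝ)).comp hS0meas

lemma tl_indep_single (T : ℕ → Ω → ℕ) (W : ℕ → Ω → ℝ) (S0 : Ω → ℕ)
    (hTmeas : ∀ k, Measurable (T k)) (hWmeas : ∀ k, Measurable (W k))
    (hS0meas : Measurable S0)
    (hindep : iIndepFun
      (Sum.elim (fun k => W k)
        (Sum.elim (fun k ω => (T k ω : ℝ)) (fun _ ω => (S0 ω : ℝ))) : ℕ ⊕ (ℕ ⊕ Unit) → Ω → ℝ) ℙ)
    (j m : ℕ) :
    IndepFun (W j) (tlV T S0 m) ℙ := by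
  classical
  have hfm := tl_fmeas T W S0 hTmeas hWmeas hS0meas
  set Sf : Finset (ℕ ⊕ (ℕ ⊕ Unit)) := {Sum.inl j} with hSf
  set Tf : Finset (ℕ ⊕ (ℕ ⊕ Unit)) :=
    insert (Sum.inr (Sum.inr ())) ((Finset.range m).image fun i => Sum.inr (Sum.inl (i+1))) with hTf
  have hdisj : Disjoint Sf Tf := by
    rw [Finset.disjoint_left]
    rintro x hx hx'
    simp only [hSf, Finset.mem_singleton] at hx
    subst hx
    simp [hTf] at hx'
  have base := hindep.indepFun_finset Sf Tf hdisj hfm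
  let φ : ((i : Sf) → ℝ) → ℝ := fun v => v ⟨Sum.inl j, by simp [hSf]⟩
  have hφ : Measurable φ := measurable_pi_apply _
  let ψ : ((i : Tf) → ℝ) → ℝ × (Fin m → ℝ) := fun v =>
    (v ⟨Sum.inr (Sum.inr ()), by simp [hTf]⟩,
     fun i => v ⟨Sum.inr (Sum.inl (i.1+1)), by
       simp only [hTf, Finset.mem_insert, Finset.mem_image, Finset.mem_range]
       exact Or.inr ⟨i.1, i.2, rfl⟩⟩)
  have hψ : Measurable ψ :=
    (measurable_pi_apply _).prodMk (measurable_pi_lambda _ fun i => measurable_pi_apply _)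
  exact base.comp hφ hψ

lemma tl_indep_pair (T : ℕ → Ω → ℕ) (W : ℕ → Ω → ℝ) (S0 : Ω → ℕ)
    (hTmeas : ∀ k, Measurable (T k)) (hWmeas : ∀ k, Measurable (W k))
    (hS0meas : Measurable S0)
    (hindep : iIndepFun
      (Sum.elim (fun k => W k)
        (Sum.elim (fun k ω => (T k ω : ℝ)) (fun _ ω => (S0 ω : ℝ))) : ℕ ⊕ (ℕ ⊕ Unit) → Ω → ℝ) ℙ)
    (j k m : ℕ) :
    IndepFun (fun ω => W j ω * W k ω) (tlV T S0 m) ℙ := by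
  classical
  have hfm := tl_fmeas T W S0 hTmeas hWmeas hS0meas
  set Sf : Finset (ℕ ⊕ (ℕ ⊕ Unit)) := {Sum.inl j, Sum.inl k} with hSf
  set Tf : Finset (ℕ ⊕ (ℕ ⊕ Unit)) :=
    insert (Sum.inr (Sum.inr ())) ((Finset.range m).image fun i => Sum.inr (Sum.inl (i+1))) with hTf
  have hdisj : Disjoint Sf Tf := by
    rw [Finset.disjoint_left]
    rintro x hx hx'
    simp only [hSf, Finset.mem_insert, Finset.mem_singleton] at hx
    rcases hx with hx | hx <;> subst hx <;> simp [hTf] at hx'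
  have base := hindep.indepFun_finset Sf Tf hdisj hfm
  let φ : ((i : Sf) → ℝ) → ℝ := fun v =>
    v ⟨Sum.inl j, by simp [hSf]⟩ * v ⟨Sum.inl k, by simp [hSf]⟩
  have hφ : Measurable φ := (measurable_pi_apply _).mul (measurable_pi_apply _)
  let ψ : ((i : Tf) → ℝ) → ℝ × (Fin m → ℝ) := fun v =>
    (v ⟨Sum.inr (Sum.inr ()), by simp [hTf]⟩,
     fun i => v ⟨Sum.inr (Sum.inl (i.1+1)), by
       simp only [hTf, Finset.mem_insert, Finset.mem_image, Finset.mem_range]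
       exact Or.inr ⟨i.1, i.2, rfl⟩⟩)
  have hψ : Measurable ψ :=
    (measurable_pi_apply _).prodMk (measurable_pi_lambda _ fun i => measurable_pi_apply _)
  exact base.comp hφ hψ

lemma tl_master {T : ℕ → Ω → ℕ} {S0 : Ω → ℕ} {F : Ω → ℝ} {m : ℕ}
    (hF : Integrable F ℙ) (hV : Measurable (tlV T S0 m)) (hI : IndepFun F (tlV T S0 m) ℙ)
    (B : Set (ℝ × (Fin m → ℝ))) (hB : MeasurableSet B) :
    ∫ ω, (tlV T S0 m ⁻¹' B).indicator F ω ∂ℙ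
      = (∫ ω, F ω ∂ℙ) * (ℙ (tlV T S0 m ⁻¹' B)).toReal :=
  tl_integral_indicator hF (hV hB) (tl_indep_indicator hI hB)

end TLIndep

/-- The Taqqu-Levy renewal-reward process `X_t = Σ_k W_k 1_{S_{k-1} ≤ t < S_k}`
(with stationary initial delay `S_0`) has mean zero and covariance
`cov(X_0, X_r) = σ_W² ℙ(S_0 ≥ r) = μ⁻¹ σ_W² E[(T_1 - r) 1_{T_1 ≥ r}]`. -/
theorem taqqu_levy_covariance
    {Ω : Type*} [MeasureSpace Ω] [IsProbabilityMeasure (ℙ : Measure Ω)]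
    (T : ℕ → Ω → ℕ) (W : ℕ → Ω → ℝ) (S0 : Ω → ℕ)
    (hTmeas : ∀ k, Measurable (T k)) (hWmeas : ∀ k, Measurable (W k))
    (hS0meas : Measurable S0)
    -- the rewards, the interarrival times and the initial delay are jointly independent
    (hindep : iIndepFun
      (Sum.elim (fun k => W k)
        (Sum.elim (fun k ω => (T k ω : ℝ)) (fun _ ω => (S0 ω : ℝ))) : ℕ ⊕ (ℕ ⊕ Unit) → Ω → ℝ) ℙ)
    -- interarrival times: i.i.d., positive, integer-valued, finite mean μ
    (hTident : ∀ k, IdentDistrib (T k) (T 1) ℙ ℙ)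
    (hTpos : ∀ k, ∀ ω, 1 ≤ T k ω)
    (hTint : Integrable (fun ω => (T 1 ω : ℝ)) ℙ)
    (μ : ℝ) (hμ : μ = ∫ ω, (T 1 ω : ℝ) ∂ℙ)
    -- stationary initial delay
    (hS0law : ∀ u : ℕ, (ℙ {ω | S0 ω = u}).toReal = μ⁻¹ * (ℙ {ω | u + 1 ≤ T 1 ω}).toReal)
    -- rewards: i.i.d. with mean zero and variance σ_W²
    (hWident : ∀ k, IdentDistrib (W k) (W 0) ℙ ℙ)
    (hWL2 : MemLp (W 0) 2 ℙ)
    (hWmean : ∫ ω, W 0 ω ∂ℙ = 0)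
    (σW2 : ℝ) (hWvar : ∫ ω, (W 0 ω) ^ 2 ∂ℙ = σW2)
    -- the renewal times `S_k = S_0 + T_1 + ⋯ + T_k`
    (S : ℕ → Ω → ℤ)
    (hS0' : ∀ ω, S 0 ω = (S0 ω : ℤ))
    (hSsucc : ∀ k ω, S (k + 1) ω = S k ω + (T (k + 1) ω : ℤ))
    -- the process (with the convention `S_{-1} = -1`)
    (X : ℤ → Ω → ℝ)
    (hX : ∀ t ω, X t ω = ∑' k : ℕ,
      if (if k = 0 then (-1 : ℤ) else S (k - 1) ω) ≤ t ∧ t < S k ω then W k ω else 0) :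
    (∀ t : ℤ, 0 ≤ t → ∫ ω, X t ω ∂ℙ = 0) ∧
    (∀ r : ℕ,
      ∫ ω, X 0 ω * X (r : ℤ) ω ∂ℙ = σW2 * (ℙ {ω | r ≤ S0 ω}).toReal ∧
      ∫ ω, X 0 ω * X (r : ℤ) ω ∂ℙ
        = μ⁻¹ * σW2 * ∫ ω, (if r ≤ T 1 ω then (T 1 ω : ℝ) - r else 0) ∂ℙ) := by
  classical
  -- basic facts about the rewards
  have hWk2 : ∀ k, MemLp (W k) 2 ℙ := fun k => ((hWident k).memLp_iff).2 hWL2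
  have hWint : ∀ k, Integrable (W k) ℙ := fun k => (hWk2 k).integrable one_le_two
  have hWWint : ∀ j k, Integrable (fun ω => W j ω * W k ω) ℙ := by
    intro j k
    have h := ((hWk2 k).smul (hWk2 j) (p := 2) (q := 2) (r := 1) (hpqr := ⟨by norm_num [ENNReal.inv_two_add_inv_two]⟩)).integrable le_rfl
    exact h
  have hWmean' : ∀ k, ∫ ω, W k ω ∂ℙ = 0 := fun k => ((hWident k).integral_eq).trans hWmean
  have hWsq : ∀ k, ∫ ω, W k ω * W k ω ∂ℙ = σW2 := by
    intro k
    have h2 : IdentDistrib (fun ω => W k ω * W k ω) (fun ω => W 0 ω * W 0 ω) ℙ ℙ :=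
      (hWident k).comp (measurable_id.mul measurable_id)
    rw [h2.integral_eq]
    simpa [pow_two] using hWvar
  -- basic facts about the renewal times
  have hSmeas : ∀ k, Measurable (S k) := by
    intro k
    induction k with
    | zero =>
      have h : S 0 = fun ω => (S0 ω : ℤ) := funext hS0'
      rw [h]
      exact (measurable_from_top : Measurable (Nat.cast : ℕ → ℤ)).comp hS0meas
    | succ n ih =>
      have h : S (n + 1) = fun ω => S n ω + (T (n + 1) ω : ℤ) := funext (hSsucc n)
      rw [h]
      exact ih.add ((measurable_from_top : Measurable (Nat.cast : ℕ → ℤ)).comp (hTmeas (n + 1)))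
  have hSrep : ∀ k ω, S k ω = (S0 ω : ℤ) + ∑ i ∈ Finset.range k, (T (i + 1) ω : ℤ) := by
    intro k
    induction k with
    | zero => intro ω; simpa using hS0' ω
    | succ n ih => intro ω; rw [hSsucc n ω, ih ω, Finset.sum_range_succ]; ring
  have hSlb : ∀ (k : ℕ) (ω : Ω), (k : ℤ) ≤ S k ω := by
    intro k ω
    rw [hSrep k ω]
    have h1 : (k : ℤ) ≤ ∑ i ∈ Finset.range k, (T (i + 1) ω : ℤ) := by
      calc (k : ℤ) = ∑ _i ∈ Finset.range k, (1 : ℤ) := by simp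
        _ ≤ _ := Finset.sum_le_sum fun i _ => by exact_mod_cast hTpos (i + 1) ω
    have h0 : (0 : ℤ) ≤ (S0 ω : ℤ) := Int.natCast_nonneg _
    linarith
  have hAmeas : ∀ k t, MeasurableSet (tlA S k t) := by
    intro k t
    have h1 : MeasurableSet {ω | (if k = 0 then (-1 : ℤ) else S (k - 1) ω) ≤ t} := by
      by_cases hk : k = 0
      · simp only [hk, if_true]
        by_cases ht : (-1 : ℤ) ≤ t <;> simp [ht]
      · simp only [if_neg hk]
        exact hSmeas (k - 1) measurableSet_Iic
    have h2 : MeasurableSet {ω | t < S k ω} := hSmeas k measurableSet_Ioi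
    exact h1.inter h2
  -- finite representation of the process
  have hXfin : ∀ (t : ℤ), 0 ≤ t → ∀ ω,
      X t ω = ∑ k ∈ Finset.range (t.toNat + 2), (tlA S k t).indicator (W k) ω := by
    intro t ht ω
    rw [hX t ω]
    have hzero : ∀ k ∉ Finset.range (t.toNat + 2),
        (if (if k = 0 then (-1 : ℤ) else S (k - 1) ω) ≤ t ∧ t < S k ω then W k ω else 0) = 0 := by
      intro k hk
      simp only [Finset.mem_range, not_lt] at hk
      have hk0 : k ≠ 0 := by omega
      rw [if_neg]
      rintro ⟨h1, h2⟩
      rw [if_neg hk0] at h1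
      have hlb := hSlb (k - 1) ω
      have h3 : ((k - 1 : ℕ) : ℤ) ≤ t := le_trans hlb h1
      have ht' : ((t.toNat : ℕ) : ℤ) = t := Int.toNat_of_nonneg ht
      omega
    rw [tsum_eq_sum hzero]
    refine Finset.sum_congr rfl fun k _ => ?_
    simp [tlA, Set.indicator_apply, Set.mem_setOf_eq]
  -- the mean is zero
  have hmean : ∀ t : ℤ, 0 ≤ t → ∫ ω, X t ω ∂ℙ = 0 := by
    intro t ht
    simp only [hXfin t ht]
    rw [integral_finset_sum _ (fun k _ => (hWint k).indicator (hAmeas k t))]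
    refine Finset.sum_eq_zero fun k hk => ?_
    simp only [Finset.mem_range] at hk
    rw [tlA_eq T S0 S hSrep (t.toNat + 2) k t (by omega),
      tl_master (hWint k) (tlV_meas hTmeas hS0meas _)
        (tl_indep_single T W S0 hTmeas hWmeas hS0meas hindep k _) _ (tlB_meas _ k t),
      hWmean' k, zero_mul]
  refine ⟨hmean, fun r => ?_⟩
  set m := r + 2 with hm
  -- the two diagonal intersection events
  have hA00 : tlA S 0 0 ∩ tlA S 0 (r : ℤ) = {ω | r + 1 ≤ S0 ω} := by
    ext ω
    have e := hS0' ω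
    simp only [tlA, Set.mem_inter_iff, Set.mem_setOf_eq, if_true]
    rw [e]
    omega
  have hA11 : tlA S 1 0 ∩ tlA S 1 (r : ℤ) = {ω | S0 ω = 0} ∩ {ω | r + 1 ≤ T 1 ω} := by
    ext ω
    have e0 := hS0' ω
    have e1 : S 1 ω = S 0 ω + (T 1 ω : ℤ) := hSsucc 0 ω
    have hT := hTpos 1 ω
    simp only [tlA, Set.mem_inter_iff, Set.mem_setOf_eq]
    norm_num
    rw [e1, e0]
    omega
  -- `S0` and `T 1` are independent
  have hP11 : (ℙ ({ω | S0 ω = 0} ∩ {ω | r + 1 ≤ T 1 ω})).toReal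
      = μ⁻¹ * (ℙ {ω | r + 1 ≤ T 1 ω}).toReal := by
    have hI : IndepFun (fun ω => (S0 ω : ℝ)) (fun ω => (T 1 ω : ℝ)) ℙ :=
      hindep.indepFun (show (Sum.inr (Sum.inr ()) : ℕ ⊕ (ℕ ⊕ Unit)) ≠ Sum.inr (Sum.inl 1) by simp)
    have h1 : {ω | S0 ω = 0} = (fun ω => (S0 ω : ℝ)) ⁻¹' {0} := by
      ext ω; simp [Nat.cast_eq_zero]
    have h2 : {ω | r + 1 ≤ T 1 ω} = (fun ω => (T 1 ω : ℝ)) ⁻¹' Set.Ici ((r : ℝ) + 1) := by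
      ext ω
      simp only [Set.mem_preimage, Set.mem_Ici, Set.mem_setOf_eq]
      constructor
      · intro h; exact_mod_cast h
      · intro h; exact_mod_cast h
    rw [h1, h2, hI.measure_inter_preimage_eq_mul _ _ (measurableSet_singleton _) measurableSet_Ici,
      ENNReal.toReal_mul, ← h1, ← h2]
    have h4 : ℙ {ω | 0 + 1 ≤ T 1 ω} = 1 := by
      have h5 : {ω | 0 + 1 ≤ T 1 ω} = Set.univ := by ext ω; simpa using hTpos 1 ω
      rw [h5, measure_univ]
    rw [hS0law 0, h4, ENNReal.toReal_one, mul_one]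
  -- master formula for products of indicator terms
  have hprod : ∀ j k : ℕ, j ≤ m → k ≤ m →
      ∫ ω, (tlA S j 0 ∩ tlA S k (r : ℤ)).indicator (fun ω' => W j ω' * W k ω') ω ∂ℙ
        = (∫ ω, W j ω * W k ω ∂ℙ) * (ℙ (tlA S j 0 ∩ tlA S k (r : ℤ))).toReal := by
    intro j k hj hk
    have hAB : tlA S j 0 ∩ tlA S k (r : ℤ)
        = tlV T S0 m ⁻¹' (tlB m j 0 ∩ tlB m k (r : ℤ)) := by
      rw [Set.preimage_inter, ← tlA_eq T S0 S hSrep m j 0 hj, ← tlA_eq T S0 S hSrep m k (r : ℤ) hk]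
    rw [hAB, tl_master (hWWint j k) (tlV_meas hTmeas hS0meas m)
      (tl_indep_pair T W S0 hTmeas hWmeas hS0meas hindep j k m) _
      ((tlB_meas m j 0).inter (tlB_meas m k (r : ℤ))), ← hAB]
  have hcross : ∀ j k : ℕ, j ≠ k → ∫ ω, W j ω * W k ω ∂ℙ = 0 := by
    intro j k hjk
    have hI : IndepFun (W j) (W k) ℙ :=
      hindep.indepFun (show (Sum.inl j : ℕ ⊕ (ℕ ⊕ Unit)) ≠ Sum.inl k by simpa using hjk)
    have h2 : ∫ ω, W j ω * W k ω ∂ℙ = (∫ ω, W j ω ∂ℙ) * ∫ ω, W k ω ∂ℙ :=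
      hI.integral_mul_eq_mul_integral (hWint j).aestronglyMeasurable (hWint k).aestronglyMeasurable
    rw [h2, hWmean' j, zero_mul]
  -- expansion of the product of the processes
  have hXprod : ∀ ω, X 0 ω * X (r : ℤ) ω = ∑ j ∈ Finset.range 2, ∑ k ∈ Finset.range m,
      (tlA S j 0 ∩ tlA S k (r : ℤ)).indicator (fun ω' => W j ω' * W k ω') ω := by
    intro ω
    rw [hXfin 0 le_rfl ω, hXfin (r : ℤ) (Int.natCast_nonneg r) ω]
    have h0 : (0 : ℤ).toNat + 2 = 2 := rfl
    have hr : ((r : ℤ)).toNat + 2 = m := by simp [hm]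
    rw [h0, hr, Finset.sum_mul_sum]
    refine Finset.sum_congr rfl fun j _ => Finset.sum_congr rfl fun k _ => ?_
    by_cases h1 : ω ∈ tlA S j 0 <;> by_cases h2 : ω ∈ tlA S k (r : ℤ) <;>
      simp [Set.indicator_apply, h1, h2]
  have hintg : ∀ j k : ℕ,
      Integrable ((tlA S j 0 ∩ tlA S k (r : ℤ)).indicator (fun ω' => W j ω' * W k ω')) ℙ :=
    fun j k => (hWWint j k).indicator ((hAmeas j 0).inter (hAmeas k (r : ℤ)))
  have hcov : ∫ ω, X 0 ω * X (r : ℤ) ω ∂ℙ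
      = σW2 * (ℙ {ω | r + 1 ≤ S0 ω}).toReal
        + σW2 * (μ⁻¹ * (ℙ {ω | r + 1 ≤ T 1 ω}).toReal) := by
    simp only [hXprod]
    rw [integral_finset_sum _ (fun j _ => integrable_finset_sum _ (fun k _ => hintg j k))]
    have hswap : ∀ j ∈ Finset.range 2,
        ∫ ω, (∑ k ∈ Finset.range m,
            (tlA S j 0 ∩ tlA S k (r : ℤ)).indicator (fun ω' => W j ω' * W k ω') ω) ∂ℙ
          = ∑ k ∈ Finset.range m,
            ∫ ω, (tlA S j 0 ∩ tlA S k (r : ℤ)).indicator (fun ω' => W j ω' * W k ω') ω ∂ℙ :=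
      fun j _ => integral_finset_sum _ (fun k _ => hintg j k)
    rw [Finset.sum_congr rfl hswap, Finset.sum_range_succ, Finset.sum_range_one]
    have h0sum : ∑ k ∈ Finset.range m,
        ∫ ω, (tlA S 0 0 ∩ tlA S k (r : ℤ)).indicator (fun ω' => W 0 ω' * W k ω') ω ∂ℙ
          = σW2 * (ℙ {ω | r + 1 ≤ S0 ω}).toReal := by
      rw [Finset.sum_eq_single_of_mem 0 (Finset.mem_range.2 (by omega)) (fun k hk hk0 => by
        rw [hprod 0 k (by omega) (le_of_lt (Finset.mem_range.1 hk)),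
          hcross 0 k (Ne.symm hk0), zero_mul]),
        hprod 0 0 (by omega) (by omega), hWsq 0, hA00]
    have h1sum : ∑ k ∈ Finset.range m,
        ∫ ω, (tlA S 1 0 ∩ tlA S k (r : ℤ)).indicator (fun ω' => W 1 ω' * W k ω') ω ∂ℙ
          = σW2 * (μ⁻¹ * (ℙ {ω | r + 1 ≤ T 1 ω}).toReal) := by
      rw [Finset.sum_eq_single_of_mem 1 (Finset.mem_range.2 (by omega)) (fun k hk hk0 => by
        rw [hprod 1 k (by omega) (le_of_lt (Finset.mem_range.1 hk)),
          hcross 1 k (Ne.symm hk0), zero_mul]),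
        hprod 1 1 (by omega) (by omega), hWsq 1, hA11, hP11]
    rw [h0sum, h1sum]
  -- splitting the tail of `S0` at `r`
  have hS0setmeas : ∀ n : ℕ, MeasurableSet {ω | n ≤ S0 ω} := fun n => hS0meas measurableSet_Ici
  have hS0eqmeas : ∀ n : ℕ, MeasurableSet {ω | S0 ω = n} :=
    fun n => hS0meas (measurableSet_singleton n)
  have hsplit : (ℙ {ω | r ≤ S0 ω}).toReal
      = (ℙ {ω | S0 ω = r}).toReal + (ℙ {ω | r + 1 ≤ S0 ω}).toReal := by
    have hU : {ω | r ≤ S0 ω} = {ω | S0 ω = r} ∪ {ω | r + 1 ≤ S0 ω} := by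
      ext ω; simp only [Set.mem_setOf_eq, Set.mem_union]; omega
    have hd : Disjoint {ω | S0 ω = r} {ω | r + 1 ≤ S0 ω} := by
      rw [Set.disjoint_left]; intro ω h1 h2
      simp only [Set.mem_setOf_eq] at h1 h2; omega
    rw [hU, measure_union hd (hS0setmeas (r + 1)),
      ENNReal.toReal_add (measure_ne_top _ _) (measure_ne_top _ _)]
  have first : ∫ ω, X 0 ω * X (r : ℤ) ω ∂ℙ = σW2 * (ℙ {ω | r ≤ S0 ω}).toReal := by
    rw [hcov, hsplit, hS0law r]; ring
  refine ⟨first, ?_⟩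
  -- the tail identity for the second form
  have htail : (ℙ {ω | r ≤ S0 ω}).toReal
      = μ⁻¹ * ∫ ω, (if r ≤ T 1 ω then (T 1 ω : ℝ) - r else 0) ∂ℙ := by
    have hiU : {ω | r ≤ S0 ω} = ⋃ u : ℕ, {ω | S0 ω = u + r} := by
      ext ω
      simp only [Set.mem_setOf_eq, Set.mem_iUnion]
      constructor
      · intro h; exact ⟨S0 ω - r, by omega⟩
      · rintro ⟨u, hu⟩; omega
    have hdisj2 : Pairwise (Function.onFun Disjoint fun u : ℕ => {ω | S0 ω = u + r}) := by
      intro u v huv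
      rw [Function.onFun, Set.disjoint_left]
      intro ω h1 h2
      simp only [Set.mem_setOf_eq] at h1 h2
      omega
    have hPS : (ℙ {ω | r ≤ S0 ω}).toReal = ∑' u : ℕ, (ℙ {ω | S0 ω = u + r}).toReal := by
      rw [hiU, measure_iUnion hdisj2 (fun u => hS0eqmeas (u + r)),
        ENNReal.tsum_toReal_eq (fun u => measure_ne_top _ _)]
    have hTr : ∀ u : ℕ, MeasurableSet {ω | u + r + 1 ≤ T 1 ω} :=
      fun u => hTmeas 1 measurableSet_Ici
    have hlin : ∫⁻ ω, ((T 1 ω - r : ℕ) : ENNReal) ∂ℙ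
        = ∑' u : ℕ, ℙ {ω | u + r + 1 ≤ T 1 ω} := by
      have hpt : ∀ ω : Ω, ((T 1 ω - r : ℕ) : ENNReal)
          = ∑' u : ℕ, {ω' : Ω | u + r + 1 ≤ T 1 ω'}.indicator (fun _ => (1 : ENNReal)) ω := by
        intro ω
        rw [← tl_nat_tsum r (T 1 ω)]
        refine tsum_congr fun u => ?_
        by_cases h : u + r + 1 ≤ T 1 ω <;> simp [Set.indicator_apply, h] <;> omega
      rw [lintegral_congr hpt,
        lintegral_tsum (fun u => (measurable_const.indicator (hTr u)).aemeasurable)]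
      refine tsum_congr fun u => ?_
      rw [show ({ω' : Ω | u + r + 1 ≤ T 1 ω'}.indicator (fun _ => (1 : ENNReal)))
          = ({ω' : Ω | u + r + 1 ≤ T 1 ω'}.indicator 1) from rfl,
        lintegral_indicator_one (hTr u)]
    have hgm : Measurable fun ω => ((T 1 ω - r : ℕ) : ℝ) :=
      (measurable_from_top : Measurable fun n : ℕ => ((n - r : ℕ) : ℝ)).comp (hTmeas 1)
    have hgeq : (fun ω => (if r ≤ T 1 ω then (T 1 ω : ℝ) - (r : ℝ) else 0))
        = fun ω => ((T 1 ω - r : ℕ) : ℝ) := by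
      funext ω
      split_ifs with h
      · rw [Nat.cast_sub h]
      · rw [Nat.sub_eq_zero_of_le (le_of_not_ge h), Nat.cast_zero]
    have hint2 : ∫ ω, (if r ≤ T 1 ω then (T 1 ω : ℝ) - r else 0) ∂ℙ
        = ∑' u : ℕ, (ℙ {ω | u + r + 1 ≤ T 1 ω}).toReal := by
      rw [show (fun ω => (if r ≤ T 1 ω then (T 1 ω : ℝ) - (r : ℝ) else 0))
          = fun ω => ((T 1 ω - r : ℕ) : ℝ) from hgeq]
      rw [integral_eq_lintegral_of_nonneg_ae
        (Filter.Eventually.of_forall fun ω => by positivity) hgm.aestronglyMeasurable]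
      simp_rw [ENNReal.ofReal_natCast]
      rw [hlin, ENNReal.tsum_toReal_eq (fun u => measure_ne_top _ _)]
    rw [hPS, hint2, ← tsum_mul_left]
    exact tsum_congr fun u => hS0law (u + r)
  rw [first, htail]
  ring
end
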